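/- arXiv:1902.06340 — 11 statements merged into one kernel-verified Lean document; each statement's English description precedes it below -/
import Mathlib

section
/- Let L be a frame and let C, D be lattice congruences on L. Then the frame congruence generated by C ∩ D equals g(C) ∩ g(D), where g(R) denotes the frame congruence generated by a relation R. Moreover, for any family (C_i)_{i ∈ I} of lattice congruences on L, the frame congruence generated by the lattice congruence ⟨⋃_i C_i⟩ equals the frame congruence generated by ⋃_i g(C_i). (Thus the map sending a lattice congruence to the frame congruence it generates preserves finite meets and arbitrary joins, i.e. it is a frame homomorphism from the frame of lattice congruences on L to the frame of frame congruences on L.) -/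
universe u v

/-- A lattice congruence on a frame `L`: an equivalence relation closed under
binary meets and binary joins (pointwise). -/
def IsLatticeCongruence {L : Type u} [Order.Frame L] (C : Set (L × L)) : Prop :=
  Equivalence (fun a b : L => (a, b) ∈ C) ∧
    ∀ p q : L × L, p ∈ C → q ∈ C →
      (p.1 ⊓ q.1, p.2 ⊓ q.2) ∈ C ∧ (p.1 ⊔ q.1, p.2 ⊔ q.2) ∈ C

/-- A frame congruence on a frame `L`: an equivalence relation closed under
binary meets and arbitrary joins (pointwise). -/
def IsFrameCongruence {L : Type u} [Order.Frame L] (C : Set (L × L)) : Prop :=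
  Equivalence (fun a b : L => (a, b) ∈ C) ∧
    (∀ p q : L × L, p ∈ C → q ∈ C → (p.1 ⊓ q.1, p.2 ⊓ q.2) ∈ C) ∧
    ∀ S : Set (L × L), S ⊆ C → (sSup (Prod.fst '' S), sSup (Prod.snd '' S)) ∈ C

/-- The smallest frame congruence containing a relation `R`. -/
def frameCongGen {L : Type u} [Order.Frame L] (R : Set (L × L)) : Set (L × L) :=
  ⋂₀ {C | IsFrameCongruence C ∧ R ⊆ C}

/-- The smallest lattice congruence containing a relation `R`. -/
def latticeCongGen {L : Type u} [Order.Frame L] (R : Set (L × L)) : Set (L × L) :=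
  ⋂₀ {C | IsLatticeCongruence C ∧ R ⊆ C}

namespace FCGAux

variable {L : Type u} [Order.Frame L]

/-- `c` is closed under the one-step saturation operator of `R`. -/
def Pcl (R : Set (L × L)) (c : L) : Prop :=
  ∀ x y : L, (x, y) ∈ R → x ≤ y → y ⊓ (x ⇨ c) ≤ c

/-- Least nucleus value at `a` forcing constraints of `R`. -/
def nu (R : Set (L × L)) (a : L) : L :=
  sInf {c | a ≤ c ∧ Pcl R c}

lemma le_nu (R : Set (L × L)) (a : L) : a ≤ nu R a :=
  le_sInf fun _ hc => hc.1

lemma nu_le {R : Set (L × L)} {a c : L} (h1 : a ≤ c) (h2 : Pcl R c) : nu R a ≤ c :=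
  sInf_le ⟨h1, h2⟩

lemma pcl_nu (R : Set (L × L)) (a : L) : Pcl R (nu R a) := by
  intro x y hxy hle
  refine le_sInf fun c hc => ?_
  calc y ⊓ (x ⇨ nu R a) ≤ y ⊓ (x ⇨ c) :=
        inf_le_inf_left _ (himp_le_himp_left (sInf_le hc))
    _ ≤ c := hc.2 x y hxy hle

lemma nu_mono (R : Set (L × L)) {a b : L} (h : a ≤ b) : nu R a ≤ nu R b :=
  nu_le (h.trans (le_nu R b)) (pcl_nu R b)

lemma nu_idem (R : Set (L × L)) (a : L) : nu R (nu R a) = nu R a :=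
  le_antisymm (nu_le le_rfl (pcl_nu R a)) (le_nu _ _)

lemma nu_mono_rel {R R' : Set (L × L)} (h : R' ⊆ R) (a : L) : nu R' a ≤ nu R a :=
  nu_le (le_nu R a) (fun x y hxy hle => pcl_nu R a x y (h hxy) hle)

/-- The key "prenucleus" inequality. -/
lemma nu_inf_le (R : Set (L × L)) (a b : L) : nu R a ⊓ b ≤ nu R (a ⊓ b) := by
  rw [← le_himp_iff]
  refine nu_le ?_ ?_
  · rw [le_himp_iff]; exact le_nu R (a ⊓ b)
  · intro x y hxy hle
    rw [le_himp_iff]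
    have h1 : y ⊓ (x ⇨ (b ⇨ nu R (a ⊓ b))) ⊓ b ≤ y ⊓ (x ⇨ nu R (a ⊓ b)) := by
      refine le_inf (inf_le_left.trans inf_le_left) ?_
      rw [le_himp_iff]
      calc y ⊓ (x ⇨ (b ⇨ nu R (a ⊓ b))) ⊓ b ⊓ x
          ≤ (x ⇨ (b ⇨ nu R (a ⊓ b))) ⊓ x ⊓ b := by
            refine le_inf (le_inf ?_ inf_le_right) ?_
            · exact inf_le_left.trans (inf_le_left.trans inf_le_right)
            · exact inf_le_left.trans inf_le_right
        _ ≤ (b ⇨ nu R (a ⊓ b)) ⊓ b := inf_le_inf_right _ himp_inf_le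
        _ ≤ nu R (a ⊓ b) := himp_inf_le
    exact h1.trans (pcl_nu R (a ⊓ b) x y hxy hle)

lemma nu_inf (R : Set (L × L)) (a b : L) : nu R (a ⊓ b) = nu R a ⊓ nu R b := by
  refine le_antisymm (le_inf (nu_mono R inf_le_left) (nu_mono R inf_le_right)) ?_
  have h1 : nu R a ⊓ nu R b ≤ nu R (a ⊓ nu R b) := nu_inf_le R a (nu R b)
  have h2 : a ⊓ nu R b ≤ nu R (a ⊓ b) := by
    calc a ⊓ nu R b = nu R b ⊓ a := inf_comm _ _
      _ ≤ nu R (b ⊓ a) := nu_inf_le R b a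
      _ = nu R (a ⊓ b) := by rw [inf_comm]
  calc nu R a ⊓ nu R b ≤ nu R (a ⊓ nu R b) := h1
    _ ≤ nu R (nu R (a ⊓ b)) := nu_mono R h2
    _ = nu R (a ⊓ b) := nu_idem R _

lemma nu_eq_of_mem {R : Set (L × L)} {x y : L} (h : (x, y) ∈ R) (hle : x ≤ y) :
    nu R x = nu R y := by
  have hy : y ≤ nu R x := by
    have := pcl_nu R x x y h hle
    rwa [himp_eq_top_iff.2 (le_nu R x), inf_top_eq] at this
  exact le_antisymm (nu_mono R hle) (nu_le hy (pcl_nu R x))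

/-- The frame congruence associated to `R` via `nu`. -/
def EC (R : Set (L × L)) : Set (L × L) := {p | nu R p.1 = nu R p.2}

lemma isFrameCongruence_EC (R : Set (L × L)) : IsFrameCongruence (EC R) := by
  refine ⟨⟨fun a => rfl, fun h => h.symm, fun h h' => h.trans h'⟩, ?_, ?_⟩
  · intro p q hp hq
    show nu R (p.1 ⊓ q.1) = nu R (p.2 ⊓ q.2)
    rw [nu_inf, nu_inf, hp, hq]
  · intro S hS
    show nu R (sSup (Prod.fst '' S)) = nu R (sSup (Prod.snd '' S))
    have key : ∀ (f g : L × L → L), (∀ p ∈ S, nu R (f p) = nu R (g p)) →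
        nu R (sSup (f '' S)) ≤ nu R (sSup (g '' S)) := by
      intro f g hfg
      have h1 : sSup (f '' S) ≤ nu R (sSup (g '' S)) := by
        refine sSup_le ?_
        rintro z ⟨p, hp, rfl⟩
        calc f p ≤ nu R (f p) := le_nu R _
          _ = nu R (g p) := hfg p hp
          _ ≤ nu R (sSup (g '' S)) := nu_mono R (le_sSup ⟨p, hp, rfl⟩)
      calc nu R (sSup (f '' S)) ≤ nu R (nu R (sSup (g '' S))) := nu_mono R h1
        _ = nu R (sSup (g '' S)) := nu_idem R _
    exact le_antisymm (key _ _ fun p hp => hS hp) (key _ _ fun p hp => (hS hp).symm)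

lemma subset_EC {C : Set (L × L)} (hC : IsLatticeCongruence C) : C ⊆ EC C := by
  rintro ⟨a, b⟩ hab
  have hbb : (b, b) ∈ C := hC.1.1 b
  have hmeet : (a ⊓ b, b) ∈ C := by
    have := (hC.2 (a, b) (b, b) hab hbb).1
    simpa using this
  have hjoin : (a ⊔ b, b) ∈ C := by
    have := (hC.2 (a, b) (b, b) hab hbb).2
    simpa using this
  have hmj : (a ⊓ b, a ⊔ b) ∈ C := hC.1.3 hmeet (hC.1.2 hjoin)
  have h1 : nu C (a ⊓ b) = nu C (a ⊔ b) := nu_eq_of_mem hmj inf_le_sup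
  have ha : nu C a = nu C (a ⊓ b) :=
    le_antisymm (by rw [h1]; exact nu_mono C le_sup_left) (nu_mono C inf_le_left)
  have hb : nu C b = nu C (a ⊓ b) :=
    le_antisymm (by rw [h1]; exact nu_mono C le_sup_right) (nu_mono C inf_le_right)
  show nu C a = nu C b
  rw [ha, hb]

lemma EC_subset_gen (R : Set (L × L)) : EC R ⊆ frameCongGen R := by
  rintro ⟨a, b⟩ hab
  intro E hE
  obtain ⟨⟨hEq, hmeetE, hjoinE⟩, hRE⟩ := hE
  -- the saturation map of E
  set m : L → L := fun a => sSup {x | (x, a) ∈ E} with hm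
  have hmem : ∀ a : L, (m a, a) ∈ E := by
    intro a
    have := hjoinE {q : L × L | q ∈ E ∧ q.2 = a} (fun q hq => hq.1)
    have h1 : Prod.fst '' {q : L × L | q ∈ E ∧ q.2 = a} = {x | (x, a) ∈ E} := by
      ext z
      constructor
      · rintro ⟨⟨z1, z2⟩, ⟨hz, rfl⟩, rfl⟩; exact hz
      · intro hz; exact ⟨(z, a), ⟨hz, rfl⟩, rfl⟩
    have h2 : Prod.snd '' {q : L × L | q ∈ E ∧ q.2 = a} = {a} := by
      ext z
      constructor
      · rintro ⟨⟨z1, z2⟩, ⟨hz, rfl⟩, rfl⟩; rfl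
      · intro hz
        have hz' : z = a := hz
        subst hz'
        exact ⟨(z, z), ⟨hEq.1 z, rfl⟩, rfl⟩
    rw [h1, h2, sSup_singleton] at this
    exact this
  have hlem : ∀ a : L, a ≤ m a := fun a => le_sSup (hEq.1 a)
  have hpcl : ∀ a : L, Pcl R (m a) := by
    intro a x y hxy hle
    set u := x ⇨ m a with hu
    have e1 : (x ⊓ u, y ⊓ u) ∈ E := by
      have := hmeetE (x, y) (u, u) (hRE hxy) (hEq.1 u)
      simpa using this
    have e2 : ((x ⊓ u) ⊔ m a, (y ⊓ u) ⊔ m a) ∈ E := by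
      have := hjoinE {((x ⊓ u), (y ⊓ u)), (m a, m a)} ?_
      · have h1 : Prod.fst '' {((x ⊓ u), (y ⊓ u)), (m a, m a)} = {x ⊓ u, m a} := by
          simp [Set.image_insert_eq]
        have h2 : Prod.snd '' {((x ⊓ u), (y ⊓ u)), (m a, m a)} = {y ⊓ u, m a} := by
          simp [Set.image_insert_eq]
        rwa [h1, h2, sSup_pair, sSup_pair] at this
      · rintro q hq
        rcases hq with rfl | hq
        · exact e1
        · simp only [Set.mem_singleton_iff] at hq; subst hq; exact hEq.1 _
    have hxu : x ⊓ u ≤ m a := by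
      rw [hu]; exact inf_himp_le
    rw [sup_eq_right.2 hxu] at e2
    -- e2 : (m a, (y ⊓ u) ⊔ m a) ∈ E, so (y ⊓ u) ⊔ m a is in the class of a
    have e3 : ((y ⊓ u) ⊔ m a, a) ∈ E := hEq.3 (hEq.2 e2) (hmem a)
    have e4 : (y ⊓ u) ⊔ m a ≤ m a := le_sSup e3
    exact le_sup_left.trans e4
  have hnum : ∀ a : L, nu R a ≤ m a := fun a => nu_le (hlem a) (hpcl a)
  have hnuE : ∀ a : L, (nu R a, a) ∈ E := by
    intro a
    have e1 : (a ⊔ nu R a, m a ⊔ nu R a) ∈ E := by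
      have := hjoinE {(a, m a), (nu R a, nu R a)} ?_
      · have h1 : Prod.fst '' {(a, m a), (nu R a, nu R a)} = {a, nu R a} := by
          simp [Set.image_insert_eq]
        have h2 : Prod.snd '' {(a, m a), (nu R a, nu R a)} = {m a, nu R a} := by
          simp [Set.image_insert_eq]
        rwa [h1, h2, sSup_pair, sSup_pair] at this
      · rintro q hq
        rcases hq with rfl | hq
        · exact hEq.2 (hmem a)
        · simp only [Set.mem_singleton_iff] at hq; subst hq; exact hEq.1 _
    rw [sup_eq_right.2 (le_nu R a), sup_eq_left.2 (hnum a)] at e1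
    exact hEq.3 e1 (hmem a)
  -- conclude
  have h1 : (a, nu R a) ∈ E := hEq.2 (hnuE a)
  have h2 : nu R a = nu R b := hab
  rw [h2] at h1
  exact hEq.3 h1 (hnuE b)

lemma gen_subset_EC {C : Set (L × L)} (hC : IsLatticeCongruence C) :
    frameCongGen C ⊆ EC C :=
  Set.sInter_subset_of_mem ⟨isFrameCongruence_EC C, subset_EC hC⟩

/-- Membership lemma for the combined pairs. -/
lemma mem_combined {C : Set (L × L)} (hC : IsLatticeCongruence C) {x y : L}
    (h : (x, y) ∈ C) (z w : L) (hw : w ≤ y) : (x ⊔ z, w ⊔ (x ⊔ z)) ∈ C := by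
  have h1 : (x ⊔ z, y ⊔ z) ∈ C := by
    have := (hC.2 (x, y) (z, z) h (hC.1.1 z)).2
    simpa using this
  have h2 : (x ⊔ (w ⊔ z), y ⊔ (w ⊔ z)) ∈ C := by
    have := (hC.2 (x, y) (w ⊔ z, w ⊔ z) h (hC.1.1 _)).2
    simpa using this
  have e1 : x ⊔ (w ⊔ z) = w ⊔ (x ⊔ z) := by
    rw [← sup_assoc, sup_comm x w, sup_assoc]
  have e2 : y ⊔ (w ⊔ z) = y ⊔ z := by
    rw [← sup_assoc, sup_eq_left.2 hw]
  rw [e1, e2] at h2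
  exact hC.1.3 h1 (hC.1.2 h2)

/-- The key inequality: the pointwise meet of the nuclei of `C` and `D` is below
the nucleus of `C ∩ D`. -/
lemma nu_inter {C D : Set (L × L)} (hC : IsLatticeCongruence C)
    (hD : IsLatticeCongruence D) (a : L) :
    nu C a ⊓ nu D a ≤ nu (C ∩ D) a := by
  set r := nu (C ∩ D) a with hr
  have hr1 : a ≤ r := le_nu _ _
  have hr2 : Pcl (C ∩ D) r := pcl_nu _ _
  have hH : nu C a ≤ nu D a ⇨ r := by
    refine nu_le ?_ ?_
    · rw [le_himp_iff]; exact inf_le_left.trans hr1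
    · intro x y hxy hle
      rw [le_himp_iff]
      set H := nu D a ⇨ r with hHdef
      set K := (y ⊓ (x ⇨ H)) ⇨ r with hKdef
      have hK : nu D a ≤ K ⊓ nu D a := by
        refine nu_le (le_inf ?_ (le_nu D a)) ?_
        · rw [hKdef, le_himp_iff]
          exact inf_le_left.trans hr1
        · -- Pcl D (K ⊓ nu D a)
          intro x' y' hx'y' hle'
          have htD : y' ⊓ (x' ⇨ (K ⊓ nu D a)) ≤ nu D a := by
            calc y' ⊓ (x' ⇨ (K ⊓ nu D a)) ≤ y' ⊓ (x' ⇨ nu D a) :=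
                  inf_le_inf_left _ (himp_le_himp_left inf_le_right)
              _ ≤ nu D a := pcl_nu D a x' y' hx'y' hle'
          refine le_inf ?_ htD
          -- ≤ K
          rw [hKdef, le_himp_iff]
          set t := y' ⊓ (x' ⇨ (K ⊓ nu D a)) with ht
          -- combined pair
          have memC : (x ⊔ x', (y ⊓ y') ⊔ (x ⊔ x')) ∈ C :=
            mem_combined hC hxy x' (y ⊓ y') inf_le_left
          have memD : (x ⊔ x', (y ⊓ y') ⊔ (x ⊔ x')) ∈ D := by
            have := mem_combined hD hx'y' x (y ⊓ y') inf_le_right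
            rwa [sup_comm x' x] at this
          have hkey : ((y ⊓ y') ⊔ (x ⊔ x')) ⊓ ((x ⊔ x') ⇨ r) ≤ r :=
            hr2 (x ⊔ x') ((y ⊓ y') ⊔ (x ⊔ x')) ⟨memC, memD⟩ le_sup_right
          set u := t ⊓ (y ⊓ (x ⇨ H)) with hu
          have hu1 : u ≤ (y ⊓ y') ⊔ (x ⊔ x') := by
            refine le_trans ?_ le_sup_left
            exact le_inf (inf_le_right.trans inf_le_left) (inf_le_left.trans inf_le_left)
          have hu2 : u ≤ (x ⊔ x') ⇨ r := by
            rw [le_himp_iff, inf_sup_left]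
            refine sup_le ?_ ?_
            · -- u ⊓ x ≤ r
              have hA : u ⊓ x ≤ H := by
                calc u ⊓ x ≤ (x ⇨ H) ⊓ x :=
                      inf_le_inf_right _ (inf_le_right.trans inf_le_right)
                  _ ≤ H := himp_inf_le
              have hB : u ⊓ x ≤ nu D a := inf_le_left.trans (inf_le_left.trans htD)
              calc u ⊓ x ≤ H ⊓ nu D a := le_inf hA hB
                _ ≤ r := by rw [hHdef]; exact himp_inf_le
            · -- u ⊓ x' ≤ r
              have hA : u ⊓ x' ≤ K := by
                calc u ⊓ x' ≤ (x' ⇨ (K ⊓ nu D a)) ⊓ x' :=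
                      inf_le_inf_right _ (inf_le_left.trans inf_le_right)
                  _ ≤ K ⊓ nu D a := himp_inf_le
                  _ ≤ K := inf_le_left
              have hB : u ⊓ x' ≤ y ⊓ (x ⇨ H) := inf_le_left.trans inf_le_right
              calc u ⊓ x' ≤ K ⊓ (y ⊓ (x ⇨ H)) := le_inf hA hB
                _ ≤ r := by rw [hKdef]; exact himp_inf_le
          exact (le_inf hu1 hu2).trans hkey
      calc y ⊓ (x ⇨ H) ⊓ nu D a ≤ (y ⊓ (x ⇨ H)) ⊓ K :=
            inf_le_inf_left (y ⊓ (x ⇨ H)) (hK.trans inf_le_left)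
        _ ≤ K ⊓ (y ⊓ (x ⇨ H)) := by rw [inf_comm]
        _ ≤ r := by rw [hKdef]; exact himp_inf_le
  calc nu C a ⊓ nu D a ≤ (nu D a ⇨ r) ⊓ nu D a := inf_le_inf_right _ hH
    _ ≤ r := himp_inf_le

-- Formal closure-operator facts about frameCongGen / latticeCongGen

lemma subset_frameCongGen (R : Set (L × L)) : R ⊆ frameCongGen R :=
  fun p hp => fun _ hE => hE.2 hp

lemma frameCongGen_mono {R S : Set (L × L)} (h : R ⊆ S) :
    frameCongGen R ⊆ frameCongGen S := by
  intro p hp E hE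
  exact hp E ⟨hE.1, h.trans hE.2⟩

lemma isFrameCongruence_sInter {S : Set (Set (L × L))}
    (h : ∀ C ∈ S, IsFrameCongruence C) : IsFrameCongruence (⋂₀ S) := by
  refine ⟨⟨?_, ?_, ?_⟩, ?_, ?_⟩
  · intro a C hC; exact (h C hC).1.1 a
  · intro a b hab C hC; exact (h C hC).1.2 (hab C hC)
  · intro a b c hab hbc C hC; exact (h C hC).1.3 (hab C hC) (hbc C hC)
  · intro p q hp hq C hC; exact (h C hC).2.1 p q (hp C hC) (hq C hC)
  · intro T hT C hC
    exact (h C hC).2.2 T (fun q hq => hT hq C hC)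

lemma isFrameCongruence_frameCongGen (R : Set (L × L)) :
    IsFrameCongruence (frameCongGen R) :=
  isFrameCongruence_sInter (fun _ hC => hC.1)

lemma isLatticeCongruence_of_isFrameCongruence {C : Set (L × L)}
    (h : IsFrameCongruence C) : IsLatticeCongruence C := by
  refine ⟨h.1, fun p q hp hq => ⟨h.2.1 p q hp hq, ?_⟩⟩
  have hsub : ({p, q} : Set (L × L)) ⊆ C := by
    rintro z (rfl | hz)
    · exact hp
    · simp only [Set.mem_singleton_iff] at hz; subst hz; exact hq
  have := h.2.2 {p, q} hsub
  have h1 : Prod.fst '' {p, q} = {p.1, q.1} := by simp [Set.image_insert_eq]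
  have h2 : Prod.snd '' {p, q} = {p.2, q.2} := by simp [Set.image_insert_eq]
  rwa [h1, h2, sSup_pair, sSup_pair] at this

lemma frameCongGen_idem (R : Set (L × L)) :
    frameCongGen (frameCongGen R) = frameCongGen R := by
  refine le_antisymm ?_ (subset_frameCongGen _)
  exact Set.sInter_subset_of_mem ⟨isFrameCongruence_frameCongGen R, le_rfl⟩

end FCGAux

open FCGAux in
/-- The map sending a lattice congruence to the frame congruence it generates
preserves binary intersections (meets) and arbitrary joins; i.e. it is a frame
homomorphism from the frame of lattice congruences to the frame of frame
congruences. -/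
theorem frameCongGen_of_latticeCong_preserves_meets_and_joins {L : Type u} [Order.Frame L] :
    (∀ C D : Set (L × L), IsLatticeCongruence C → IsLatticeCongruence D →
      frameCongGen (C ∩ D) = frameCongGen C ∩ frameCongGen D) ∧
    (∀ {ι : Type v} (C : ι → Set (L × L)), (∀ i, IsLatticeCongruence (C i)) →
      frameCongGen (latticeCongGen (⋃ i, C i)) =
        frameCongGen (⋃ i, frameCongGen (C i))) := by
  constructor
  · intro C D hC hD
    refine le_antisymm
      (Set.subset_inter (frameCongGen_mono Set.inter_subset_left)
        (frameCongGen_mono Set.inter_subset_right)) ?_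
    rintro ⟨a, b⟩ ⟨haC, haD⟩
    have hCD : IsLatticeCongruence (C ∩ D) := by
      refine ⟨⟨fun a => ⟨hC.1.1 a, hD.1.1 a⟩,
        fun h => ⟨hC.1.2 h.1, hD.1.2 h.2⟩,
        fun h h' => ⟨hC.1.3 h.1 h'.1, hD.1.3 h.2 h'.2⟩⟩, ?_⟩
      intro p q hp hq
      exact ⟨⟨(hC.2 p q hp.1 hq.1).1, (hD.2 p q hp.2 hq.2).1⟩,
        ⟨(hC.2 p q hp.1 hq.1).2, (hD.2 p q hp.2 hq.2).2⟩⟩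
    have h1 : nu C a = nu C b := gen_subset_EC hC haC
    have h2 : nu D a = nu D b := gen_subset_EC hD haD
    have key : ∀ z : L, nu (C ∩ D) z = nu C z ⊓ nu D z := by
      intro z
      refine le_antisymm
        (le_inf (nu_mono_rel Set.inter_subset_left z)
          (nu_mono_rel Set.inter_subset_right z)) (nu_inter hC hD z)
    have : nu (C ∩ D) a = nu (C ∩ D) b := by rw [key, key, h1, h2]
    exact EC_subset_gen (C ∩ D) this
  · intro ι C hC
    have h1 : (⋃ i, C i) ⊆ latticeCongGen (⋃ i, C i) :=
      fun p hp => fun _ hE => hE.2 hp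
    have h2 : latticeCongGen (⋃ i, C i) ⊆ frameCongGen (⋃ i, C i) :=
      Set.sInter_subset_of_mem
        ⟨isLatticeCongruence_of_isFrameCongruence
          (isFrameCongruence_frameCongGen _), subset_frameCongGen _⟩
    have e1 : frameCongGen (latticeCongGen (⋃ i, C i)) = frameCongGen (⋃ i, C i) := by
      refine le_antisymm ?_ (frameCongGen_mono h1)
      calc frameCongGen (latticeCongGen (⋃ i, C i))
          ⊆ frameCongGen (frameCongGen (⋃ i, C i)) := frameCongGen_mono h2
        _ = frameCongGen (⋃ i, C i) := frameCongGen_idem _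
    have e2 : frameCongGen (⋃ i, frameCongGen (C i)) = frameCongGen (⋃ i, C i) := by
      refine le_antisymm ?_
        (frameCongGen_mono (Set.iUnion_mono fun i => subset_frameCongGen (C i)))
      have h3 : (⋃ i, frameCongGen (C i)) ⊆ frameCongGen (⋃ i, C i) := by
        refine Set.iUnion_subset fun i => ?_
        exact frameCongGen_mono (Set.subset_iUnion C i)
      calc frameCongGen (⋃ i, frameCongGen (C i))
          ⊆ frameCongGen (frameCongGen (⋃ i, C i)) := frameCongGen_mono h3
        _ = frameCongGen (⋃ i, C i) := frameCongGen_idem _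
    rw [e1, e2]
end

section
/- Let L be a frame, C a lattice congruence on L, and a, b ∈ L. Then (a,b) belongs to the frame congruence g(C) generated by C if and only if there exist an ordinal γ and a monotone function x from the ordinals ≤ γ to L such that x(0) ≤ a ⊓ b, a ⊔ b ≤ x(γ), (x(α), x(α+1)) ∈ C for every α < γ, and x(β) = ⨆_{α < β} x(α) for every limit ordinal β ≤ γ. -/
universe u

/-!
Extend the chains of the statement constantly beyond `γ`, and say that `a` reaches `b` if such a
chain leads from `a` to `b`. Reachability is closed under transfinite composition: the chains for
the individual steps are padded to a common length `g` and laid end to end along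
`α = g * (α / g) + α % g`. Hence it is transitive, and enumerating a family by ordinals shows that
`a` reaches `a ⊔ ⨆ i, v i` whenever it reaches every `v i`. In a frame, `t ⊔ -` and `t ⊓ -`
preserve `C` and nonempty joins, so they carry chains to chains; together these facts make the
pairs `(a, b)` with `a ⊓ b` reaching `a ⊔ b` a frame congruence containing `C`. Conversely, every
frame congruence containing `C` contains `(x 0, x α)` for all `α ≤ γ`, by transfinite induction.
-/

open Order Ordinal Set

section Chains

variable {L : Type u} [CompleteLattice L] {R : Set (L × L)} {a b c : L}

structure IsTransfiniteChain (R : Set (L × L)) (x : Ordinal.{u} → L) : Prop where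
  monotone : Monotone x
  step : ∀ α, (x α, x (α + 1)) ∈ R
  limit : ∀ β, IsSuccLimit β → x β = ⨆ α : Iio β, x α

/-- Chains run through all ordinals and stop moving at some stage `γ`, so that a chain of length
`γ` is also one of every length `≥ γ`. -/
def Reaches (R : Set (L × L)) (a b : L) : Prop :=
  ∃ x : Ordinal.{u} → L, IsTransfiniteChain R x ∧ x 0 = a ∧ ∃ γ, ∀ α, γ ≤ α → x α = b

def reachRel (R : Set (L × L)) : Set (L × L) :=
  {p | Reaches R p.1 p.2}

theorem Reaches.le (h : Reaches R a b) : a ≤ b := by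
  obtain ⟨x, hx, rfl, γ, hγ⟩ := h
  exact (hx.monotone zero_le).trans_eq (hγ γ le_rfl)

theorem Reaches.refl (hR : ∀ a, (a, a) ∈ R) (a : L) : Reaches R a a :=
  ⟨fun _ => a, ⟨monotone_const, fun _ => hR a, fun β hβ => by
    have : Nonempty (Iio β) := ⟨⟨0, hβ.bot_lt⟩⟩
    exact ciSup_const.symm⟩, rfl, 0, fun _ _ => rfl⟩

theorem Reaches.of_two_steps (hR : ∀ a, (a, a) ∈ R) (hab : a ≤ b) (hbc : b ≤ c)
    (h₁ : (a, b) ∈ R) (h₂ : (b, c) ∈ R) : Reaches R a c := by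
  refine ⟨fun α => if α = 0 then a else if α = 1 then b else c, ⟨?_, fun α => ?_, fun β hβ => ?_⟩,
    if_pos rfl, 2, fun α hα => ?_⟩
  · intro α β hαβ
    dsimp only
    split_ifs <;> simp_all [Order.le_one_iff, hab.trans hbc]
  · rcases eq_or_ne α 0 with rfl | h0
    · simpa using h₁
    rcases eq_or_ne α 1 with rfl | h1
    · simpa [one_add_one_eq_two] using h₂
    · have : α + 1 ≠ 1 := fun h => h0 (Order.add_one_inj.1 (h.trans (zero_add 1).symm))
      simpa [h0, h1, this] using hR c
  · have h2 : (2 : Ordinal) < β := by exact_mod_cast natCast_lt_of_isSuccLimit hβ 2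
    simp only [(h2.trans' two_pos).ne', (h2.trans' one_lt_two).ne', if_false]
    refine le_antisymm (le_iSup_of_le ⟨2, h2⟩ (by simp)) (iSup_le fun α => ?_)
    split_ifs
    exacts [hab.trans hbc, hbc, le_rfl]
  · have h0 : α ≠ 0 := (two_pos.trans_le hα).ne'
    have h1 : α ≠ 1 := (one_lt_two.trans_le hα).ne'
    simp [h0, h1]

theorem Reaches.of_mem (hR : ∀ a, (a, a) ∈ R) (hab : a ≤ b) (h : (a, b) ∈ R) : Reaches R a b :=
  .of_two_steps hR hab le_rfl h (hR b)

theorem Reaches.map {f : L → L} (h : Reaches R a b) (hf : Monotone f)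
    (hfR : ∀ p ∈ R, (f p.1, f p.2) ∈ R)
    (hf_iSup : ∀ (ι : Type (u + 1)) [Nonempty ι] (g : ι → L), f (⨆ i, g i) = ⨆ i, f (g i)) :
    Reaches R (f a) (f b) := by
  obtain ⟨x, hx, rfl, γ, hγ⟩ := h
  refine ⟨f ∘ x, ⟨hf.comp hx.monotone, fun α => hfR _ (hx.step α), fun β hβ => ?_⟩, rfl, γ,
    fun α hα => congrArg f (hγ α hα)⟩
  have : Nonempty (Iio β) := ⟨⟨0, hβ.bot_lt⟩⟩
  simp only [Function.comp_apply, hx.limit β hβ, hf_iSup]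

structure IsRefinement (R : Set (L × L)) (y : Ordinal.{u} → L) (g : Ordinal.{u})
    (X : Ordinal.{u} → Ordinal.{u} → L) : Prop where
  ne_zero : g ≠ 0
  chain : ∀ β, IsTransfiniteChain R (X β)
  zero : ∀ β, X β 0 = y β
  tail : ∀ β η, g ≤ η → X β η = y (β + 1)

noncomputable def concatChains (g : Ordinal.{u}) (X : Ordinal.{u} → Ordinal.{u} → L)
    (α : Ordinal.{u}) : L :=
  X (α / g) (α % g)

namespace IsRefinement

variable {S : Set (L × L)} {y : Ordinal.{u} → L} {g : Ordinal.{u}}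
  {X : Ordinal.{u} → Ordinal.{u} → L}

theorem concatChains_mul_add (h : IsRefinement R y g X) (β : Ordinal) {η : Ordinal}
    (hη : η ≤ g) : concatChains g X (g * β + η) = X β η := by
  rcases hη.lt_or_eq with hη | rfl
  · simp only [concatChains, mul_add_div _ h.ne_zero, div_eq_zero_of_lt hη, add_zero,
      mul_add_mod_self, mod_eq_of_lt hη]
  · rw [← mul_add_one, concatChains, mul_div_cancel _ h.ne_zero, mul_mod, h.zero,
      h.tail β _ le_rfl]

theorem monotone_concatChains (h : IsRefinement R y g X) (hy : Monotone y) :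
    Monotone (concatChains g X) := by
  intro α α' hαα'
  rcases (div_le_left hαα' g).lt_or_eq with hq | hq
  · calc X (α / g) (α % g) ≤ X (α / g) g := (h.chain _).monotone (mod_lt α h.ne_zero).le
      _ = y (α / g + 1) := h.tail _ _ le_rfl
      _ ≤ y (α' / g) := hy (Order.add_one_le_of_lt hq)
      _ = X (α' / g) 0 := (h.zero _).symm
      _ ≤ X (α' / g) (α' % g) := (h.chain _).monotone zero_le
  · simp only [concatChains, hq]
    refine (h.chain _).monotone ?_
    by_contra! hr
    refine hαα'.not_gt ?_
    calc α' = g * (α' / g) + α' % g := (div_add_mod α' g).symm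
      _ < g * (α / g) + α % g := by rw [hq]; exact (add_lt_add_iff_left _).2 hr
      _ = α := div_add_mod α g

theorem step_concatChains (h : IsRefinement R y g X) (α : Ordinal) :
    (concatChains g X α, concatChains g X (α + 1)) ∈ R := by
  have hα : α + 1 = g * (α / g) + (α % g + 1) := by rw [← add_assoc, div_add_mod]
  rw [hα, h.concatChains_mul_add _ (Order.add_one_le_of_lt (mod_lt α h.ne_zero))]
  exact (h.chain _).step _

theorem concatChains_mul_add_le_iSup (h : IsRefinement R y g X) (p : Ordinal) {s : Ordinal}
    (hs : IsSuccLimit s) (hsg : s ≤ g) :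
    concatChains g X (g * p + s) ≤ ⨆ α : Iio (g * p + s), concatChains g X α := by
  rw [h.concatChains_mul_add p hsg, (h.chain p).limit s hs]
  exact iSup_le fun η => le_iSup_of_le ⟨g * p + η, mem_Iio.2 ((add_lt_add_iff_left _).2 η.2)⟩
    (h.concatChains_mul_add p (η.2.le.trans hsg)).ge

theorem limit_concatChains (h : IsRefinement R y g X) (hy : IsTransfiniteChain S y)
    {δ : Ordinal} (hδ : IsSuccLimit δ) :
    concatChains g X δ = ⨆ α : Iio δ, concatChains g X α := by
  refine le_antisymm ?_ (iSup_le fun α => h.monotone_concatChains hy.monotone α.2.le)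
  -- `δ = g * q + r` with `r` a limit, or with `r = 0` and `q` a successor (then `g` is a limit)
  -- or a limit
  have hδ' := div_add_mod δ g
  rcases eq_or_ne (δ % g) 0 with hr | hr
  · rw [hr, add_zero] at hδ'
    rcases zero_or_succ_or_isSuccLimit (δ / g) with hq | ⟨p, hp⟩ | hq
    · rw [hq, mul_zero] at hδ'
      exact absurd hδ'.symm hδ.ne_bot
    · rw [← hp, mul_succ] at hδ'
      rw [← hδ'] at hδ ⊢
      have hg : IsSuccLimit g := (isSuccLimit_add_iff.1 hδ).resolve_right fun h' => h.ne_zero h'.1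
      exact h.concatChains_mul_add_le_iSup p hg le_rfl
    · rw [← hδ', ← add_zero (g * (δ / g)), h.concatChains_mul_add _ zero_le, h.zero,
        hy.limit _ hq, add_zero]
      refine iSup_le fun β => le_iSup_of_le ⟨g * β, ?_⟩ ?_
      · exact (mul_lt_mul_iff_right₀ (pos_iff_ne_zero.2 h.ne_zero)).2 β.2
      · show y β ≤ concatChains g X (g * β)
        rw [← add_zero (g * β), h.concatChains_mul_add _ zero_le, h.zero]
  · rw [← hδ'] at hδ ⊢
    have hr' : IsSuccLimit (δ % g) := (isSuccLimit_add_iff.1 hδ).resolve_right fun h' => hr h'.1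
    exact h.concatChains_mul_add_le_iSup _ hr' (mod_lt δ h.ne_zero).le

theorem isTransfiniteChain_concatChains (h : IsRefinement R y g X)
    (hy : IsTransfiniteChain S y) : IsTransfiniteChain R (concatChains g X) :=
  ⟨h.monotone_concatChains hy.monotone, h.step_concatChains, fun _ hδ => h.limit_concatChains hy hδ⟩

theorem concatChains_eq_of_le (h : IsRefinement R y g X) {l : Ordinal} {b : L}
    (hl : ∀ β, l ≤ β → y β = b) {α : Ordinal} (hα : g * l ≤ α) : concatChains g X α = b := by
  have hq : l ≤ α / g := (mul_le_iff_le_div h.ne_zero).1 hα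
  apply le_antisymm
  · calc X (α / g) (α % g) ≤ X (α / g) g := (h.chain _).monotone (mod_lt α h.ne_zero).le
      _ = y (α / g + 1) := h.tail _ _ le_rfl
      _ = b := hl _ (hq.trans le_self_add)
  · calc b = y (α / g) := (hl _ hq).symm
      _ = X (α / g) 0 := (h.zero _).symm
      _ ≤ X (α / g) (α % g) := (h.chain _).monotone zero_le

end IsRefinement

theorem Reaches.flatten (h : Reaches (reachRel R) a b) : Reaches R a b := by
  obtain ⟨y, hy, rfl, l, hl⟩ := h
  choose X hX hX0 len hlen using fun β => (hy.step β : Reaches R (y β) (y (β + 1)))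
  -- for `β ≥ l` the chain `X β` joins `y β = y (β + 1)` to itself, so it is constant: only the
  -- lengths below `l` need a common bound
  set g := (⨆ β : Iio l, len β) + 1
  have hg : IsRefinement R y g X := by
    refine ⟨(add_pos_of_right one_pos _).ne', hX, hX0, fun β η hη => ?_⟩
    rcases lt_or_ge β l with hβ | hβ
    · refine hlen β η (le_trans ?_ hη)
      exact (Ordinal.le_iSup (fun β : Iio l => len β) ⟨β, hβ⟩).trans le_self_add
    have hβ' : y (β + 1) = y β := by rw [hl β hβ, hl _ (hβ.trans le_self_add)]
    apply le_antisymm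
    · calc X β η ≤ X β (max η (len β)) := (hX β).monotone (le_max_left _ _)
        _ = y (β + 1) := hlen β _ (le_max_right _ _)
    · calc y (β + 1) = X β 0 := by rw [hβ', hX0]
        _ ≤ X β η := (hX β).monotone zero_le
  refine ⟨concatChains g X, hg.isTransfiniteChain_concatChains hy, ?_, g * l,
    fun α hα => hg.concatChains_eq_of_le hl hα⟩
  simp [concatChains, hX0]

theorem Reaches.trans (hR : ∀ a, (a, a) ∈ R) (h₁ : Reaches R a b) (h₂ : Reaches R b c) :
    Reaches R a c :=
  .flatten (.of_two_steps (Reaches.refl hR) h₁.le h₂.le h₁ h₂)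

end Chains

section Frame

variable {L : Type u} [Order.Frame L] {C D : Set (L × L)} {a b c d : L}

theorem IsLatticeCongruence.inf_sup_mem (hC : IsLatticeCongruence C) (h : (a, b) ∈ C) :
    (a ⊓ b, a ⊔ b) ∈ C := by
  have h₁ : (a ⊓ b, b) ∈ C := by simpa using (hC.2 (a, b) (b, b) h (hC.1.refl b)).1
  have h₂ : (a ⊔ b, b) ∈ C := by simpa using (hC.2 (a, b) (b, b) h (hC.1.refl b)).2
  exact hC.1.trans h₁ (hC.1.symm h₂)

theorem Reaches.sup_left (hC : IsLatticeCongruence C) (t : L) (h : Reaches C a b) :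
    Reaches C (t ⊔ a) (t ⊔ b) :=
  h.map (fun _ _ h => sup_le_sup_left h t) (fun p hp => (hC.2 (t, t) p (hC.1.refl t) hp).2)
    fun _ _ _ => sup_iSup

theorem Reaches.inf_left (hC : IsLatticeCongruence C) (t : L) (h : Reaches C a b) :
    Reaches C (t ⊓ a) (t ⊓ b) :=
  h.map (fun _ _ h => inf_le_inf_left t h) (fun p hp => (hC.2 (t, t) p (hC.1.refl t) hp).1)
    fun _ _ g => inf_iSup_eq t g

theorem Reaches.sup (hC : IsLatticeCongruence C) (h₁ : Reaches C a b) (h₂ : Reaches C c d) :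
    Reaches C (a ⊔ c) (b ⊔ d) := by
  have h₁' := h₁.sup_left hC c
  rw [sup_comm c a, sup_comm c b] at h₁'
  exact h₁'.trans hC.1.refl (h₂.sup_left hC b)

theorem Reaches.inf (hC : IsLatticeCongruence C) (h₁ : Reaches C a b) (h₂ : Reaches C c d) :
    Reaches C (a ⊓ c) (b ⊓ d) := by
  have h₁' := h₁.inf_left hC c
  rw [inf_comm c a, inf_comm c b] at h₁'
  exact h₁'.trans hC.1.refl (h₂.inf_left hC b)

theorem Reaches.of_le_of_le (hC : IsLatticeCongruence C) (h : Reaches C a d) (hab : a ≤ b)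
    (hbc : b ≤ c) (hcd : c ≤ d) : Reaches C b c := by
  have h₁ := h.sup_left hC b
  rw [sup_eq_left.2 hab, sup_eq_right.2 (hbc.trans hcd)] at h₁
  have h₂ := h₁.inf_left hC c
  rwa [inf_eq_right.2 hbc, inf_eq_left.2 hcd] at h₂

theorem Reaches.iSup (hC : IsLatticeCongruence C) {ι : Type u} {v : ι → L}
    (h : ∀ i, Reaches C a (v i)) : Reaches C a (a ⊔ ⨆ i, v i) := by
  let r := WellOrderingRel (α := ι)
  -- each step of `y` adds a single `v i`
  let y : Ordinal.{u} → L := fun β => a ⊔ ⨆ i, ⨆ (_ : typein r i < β), v i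
  have hy_mono : Monotone y := fun β β' h =>
    sup_le_sup_left (biSup_mono fun _ hi => lt_of_lt_of_le hi h) a
  have hy_le : ∀ i β, typein r i < β → v i ≤ y β := fun i β hi =>
    le_sup_of_le_right (le_iSup₂_of_le i hi le_rfl)
  have hy_tail : ∀ β, type r ≤ β → y β = a ⊔ ⨆ i, v i := fun β hβ => by
    simp only [y, (typein_lt_type r _).trans_le hβ, iSup_pos]
  refine .flatten ⟨y, ⟨hy_mono, fun β => ?_, fun β hβ => ?_⟩, by simp [y], type r, hy_tail⟩
  · show Reaches C (y β) (y (β + 1))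
    rcases lt_or_ge β (type r) with hβ | hβ
    · obtain ⟨i, rfl⟩ := typein_surj r hβ
      have hy_succ : y (typein r i + 1) = y (typein r i) ⊔ v i := by
        refine le_antisymm (sup_le (le_sup_of_le_left le_sup_left) (iSup₂_le fun j hj => ?_))
          (sup_le (hy_mono le_self_add) (hy_le i _ (Order.lt_add_one_iff.2 le_rfl)))
        rcases (Order.lt_add_one_iff.1 hj).lt_or_eq with hj | hj
        · exact le_sup_of_le_left (hy_le j _ hj)
        · rw [typein_inj] at hj
          exact hj ▸ le_sup_right
      have := (h i).sup_left hC (y (typein r i))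
      rwa [sup_eq_left.2 (le_sup_left : a ≤ y _), ← hy_succ] at this
    · rw [hy_tail β hβ, hy_tail _ (hβ.trans le_self_add)]
      exact .refl hC.1.refl _
  · refine le_antisymm (sup_le ?_ (iSup₂_le fun i hi => ?_)) (iSup_le fun α => hy_mono α.2.le)
    · exact le_iSup_of_le ⟨0, hβ.bot_lt⟩ le_sup_left
    · exact le_iSup_of_le ⟨typein r i + 1, hβ.add_one_lt hi⟩
        (hy_le i _ (Order.lt_add_one_iff.2 le_rfl))

def chainCong (C : Set (L × L)) : Set (L × L) :=
  {p | Reaches C (p.1 ⊓ p.2) (p.1 ⊔ p.2)}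

theorem subset_chainCong (hC : IsLatticeCongruence C) : C ⊆ chainCong C :=
  fun _ hp => .of_mem hC.1.refl inf_le_sup (hC.inf_sup_mem hp)

theorem chainCong_trans (hC : IsLatticeCongruence C) (hab : (a, b) ∈ chainCong C)
    (hbc : (b, c) ∈ chainCong C) : (a, c) ∈ chainCong C := by
  have down : Reaches C (a ⊓ b ⊓ (b ⊓ c)) b := by
    simpa using (Reaches.of_le_of_le hC hab le_rfl inf_le_right le_sup_right).inf hC
      (Reaches.of_le_of_le hC hbc le_rfl inf_le_left le_sup_left)
  have up : Reaches C b (a ⊔ b ⊔ (b ⊔ c)) := by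
    simpa using (Reaches.of_le_of_le hC hab inf_le_right le_sup_right le_rfl).sup hC
      (Reaches.of_le_of_le hC hbc inf_le_left le_sup_left le_rfl)
  exact (down.trans hC.1.refl up).of_le_of_le hC
    (le_inf (inf_le_left.trans inf_le_left) (inf_le_right.trans inf_le_right)) inf_le_sup
    (sup_le (le_sup_left.trans le_sup_left) (le_sup_right.trans le_sup_right))

theorem chainCong_inf (hC : IsLatticeCongruence C) {p q : L × L} (hp : p ∈ chainCong C)
    (hq : q ∈ chainCong C) : (p.1 ⊓ q.1, p.2 ⊓ q.2) ∈ chainCong C :=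
  (Reaches.inf hC hp hq).of_le_of_le hC
    (le_inf (inf_le_inf inf_le_left inf_le_left) (inf_le_inf inf_le_right inf_le_right)) inf_le_sup
    (sup_le (inf_le_inf le_sup_left le_sup_left) (inf_le_inf le_sup_right le_sup_right))

theorem chainCong_sSup (hC : IsLatticeCongruence C) {S : Set (L × L)} (hS : S ⊆ chainCong C) :
    (sSup (Prod.fst '' S), sSup (Prod.snd '' S)) ∈ chainCong C := by
  set m := sSup (Prod.fst '' S) ⊓ sSup (Prod.snd '' S)
  have hstep : ∀ p : S, Reaches C m (m ⊔ (p.1.1 ⊔ p.1.2)) := fun p => by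
    have := (hS p.2).sup_left hC m
    have hm : p.1.1 ⊓ p.1.2 ≤ m :=
      inf_le_inf (le_sSup (mem_image_of_mem _ p.2)) (le_sSup (mem_image_of_mem _ p.2))
    rwa [sup_eq_left.2 hm] at this
  refine (Reaches.iSup hC hstep).of_le_of_le hC le_rfl inf_le_sup
    (sup_le (sSup_le ?_) (sSup_le ?_)) <;>
  · rintro _ ⟨p, hp, rfl⟩
    exact le_sup_of_le_right (le_iSup_of_le ⟨p, hp⟩ (le_sup_of_le_right (by simp)))

theorem isFrameCongruence_chainCong (hC : IsLatticeCongruence C) :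
    IsFrameCongruence (chainCong C) :=
  ⟨⟨fun a => by simpa [chainCong] using Reaches.refl hC.1.refl a,
    fun h => by simpa [chainCong, inf_comm, sup_comm] using h, chainCong_trans hC⟩,
    fun _ _ => chainCong_inf hC, fun _ => chainCong_sSup hC⟩

theorem frameCongGen_subset_chainCong (hC : IsLatticeCongruence C) :
    frameCongGen C ⊆ chainCong C :=
  sInter_subset_of_mem ⟨isFrameCongruence_chainCong hC, subset_chainCong hC⟩

theorem IsFrameCongruence.sup_mem (hD : IsFrameCongruence D) {p q : L × L} (hp : p ∈ D)
    (hq : q ∈ D) : (p.1 ⊔ q.1, p.2 ⊔ q.2) ∈ D := by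
  simpa [image_pair, sSup_pair] using hD.2.2 {p, q} (pair_subset hp hq)

theorem IsFrameCongruence.mem_of_le_of_le (hD : IsFrameCongruence D) (h : (c, d) ∈ D)
    (hc : c ≤ a ⊓ b) (hd : a ⊔ b ≤ d) : (a, b) ∈ D := by
  have key : ∀ e, c ≤ e → e ≤ d → (e, d) ∈ D := fun e hce hed => by
    simpa [sup_eq_right.2 hce, sup_eq_left.2 hed] using hD.sup_mem h (hD.1.refl e)
  exact hD.1.trans (key a (hc.trans inf_le_left) (le_sup_left.trans hd))
    (hD.1.symm (key b (hc.trans inf_le_right) (le_sup_right.trans hd)))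

theorem IsFrameCongruence.mem_of_chain (hD : IsFrameCongruence D) (hCD : C ⊆ D)
    {γ : Ordinal.{u}} {x : Ordinal.{u} → L} (hstep : ∀ α < γ, (x α, x (α + 1)) ∈ C)
    (hlim : ∀ β ≤ γ, IsSuccLimit β → x β = ⨆ α : Iio β, x α) :
    ∀ α ≤ γ, (x 0, x α) ∈ D := by
  intro α
  induction α using Ordinal.limitRecOn with
  | zero => exact fun _ => hD.1.refl _
  | add_one α ih =>
    exact fun h => hD.1.trans (ih (le_self_add.trans h)) (hCD (hstep α (Order.add_one_le_iff.1 h)))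
  | limit β hβ ih =>
    intro h
    have := hD.2.2 ((fun α => (x 0, x α)) '' Iio β) (by
      rintro _ ⟨α, hα, rfl⟩
      exact ih α hα (hα.le.trans h))
    have hne : (Iio β).Nonempty := ⟨0, hβ.bot_lt⟩
    rwa [image_image, image_image, hne.image_const, sSup_singleton, sSup_image',
      ← hlim β h hβ] at this

end Frame

/-- A pair `(a, b)` lies in the frame congruence generated by a lattice
congruence `C` iff it is connected by a transfinite increasing `C`-chain. -/
theorem mem_frameCongGen_iff_transfinite_chain {L : Type u} [Order.Frame L]
    (C : Set (L × L)) (hC : IsLatticeCongruence C) (a b : L) :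
    (a, b) ∈ frameCongGen C ↔
      ∃ (γ : Ordinal.{u}) (x : Ordinal.{u} → L),
        MonotoneOn x (Set.Iic γ) ∧
        x 0 ≤ a ⊓ b ∧
        a ⊔ b ≤ x γ ∧
        (∀ α < γ, (x α, x (α + 1)) ∈ C) ∧
        (∀ β ≤ γ, Order.IsSuccLimit β → x β = ⨆ α : Set.Iio β, x α) := by
  constructor
  · intro h
    obtain ⟨x, hx, h0, γ, hγ⟩ := frameCongGen_subset_chainCong hC h
    exact ⟨γ, x, hx.monotone.monotoneOn _, h0.le, (hγ γ le_rfl).ge, fun α _ => hx.step α,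
      fun β _ => hx.limit β⟩
  · rintro ⟨γ, x, -, h0, hγ, hstep, hlim⟩
    exact mem_sInter.2 fun D ⟨hD, hCD⟩ =>
      hD.mem_of_le_of_le (hD.mem_of_chain hCD hstep hlim γ le_rfl) h0 hγ
end

section
/- Let L be a frame and C a lattice congruence on L such that the frame congruence generated by C is all of L × L. Then there exists a subset A ⊆ L such that: (i) A is well-ordered (every nonempty subset of A has a least element with respect to the order of L); (ii) A is closed under arbitrary suprema, i.e. sSup B ∈ A for every B ⊆ A; (iii) ⊤ ∈ A; and (iv) for every a ∈ A with a ≠ ⊤, the pair (a, a⁺) belongs to C, where a⁺ denotes the least element of {x ∈ A : a < x}. -/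
universe u

namespace FrameCongProof


variable {L : Type u} [Order.Frame L]

structure IsCChain (C : Set (L × L)) (a b : L) (A : Set L) : Prop where
  mem_left : a ∈ A
  mem_right : b ∈ A
  le_left : ∀ x ∈ A, a ≤ x
  le_right : ∀ x ∈ A, x ≤ b
  wo : ∀ B ⊆ A, B.Nonempty → ∃ m, IsLeast B m
  supClosed : ∀ B ⊆ A, B.Nonempty → sSup B ∈ A
  succ : ∀ x ∈ A, x ≠ b → ∃ s, IsLeast {y | y ∈ A ∧ x < y} s ∧ (x, s) ∈ C

def PP (C : Set (L × L)) (a b : L) : Prop := ∃ A, IsCChain C a b A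

variable {C : Set (L × L)} {a b c : L} {A A₁ A₂ : Set L}

theorem IsCChain.le (h : IsCChain C a b A) : a ≤ b := h.le_right a h.mem_left

theorem IsCChain.total (h : IsCChain C a b A) {x y : L} (hx : x ∈ A) (hy : y ∈ A) :
    x ≤ y ∨ y ≤ x := by
  obtain ⟨m, hmB, hml⟩ := h.wo {x, y} (by
    intro z hz; rcases hz with rfl | hz
    · exact hx
    · simpa [Set.mem_singleton_iff.1 hz] using hy) ⟨x, by simp⟩
  rcases hmB with rfl | hmB
  · exact Or.inl (hml (by simp : y ∈ ({m, y} : Set L)))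
  · rw [Set.mem_singleton_iff] at hmB
    subst hmB
    exact Or.inr (hml (by simp : x ∈ ({x, m} : Set L)))

theorem isCChain_singleton (C : Set (L × L)) (a : L) : IsCChain C a a {a} where
  mem_left := rfl
  mem_right := rfl
  le_left := fun x hx => le_of_eq (Set.mem_singleton_iff.1 hx).symm
  le_right := fun x hx => le_of_eq (Set.mem_singleton_iff.1 hx)
  wo := fun B hB hne => by
    refine ⟨a, ?_, ?_⟩
    · obtain ⟨x, hx⟩ := hne
      have := Set.mem_singleton_iff.1 (hB hx); subst this; exact hx
    · intro y hy; exact le_of_eq (Set.mem_singleton_iff.1 (hB hy)).symm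
  supClosed := fun B hB hne => by
    have : B = {a} := Set.Nonempty.subset_singleton_iff hne |>.1 hB
    subst this; simp
  succ := fun x hx hxb => absurd (Set.mem_singleton_iff.1 hx) hxb

theorem IsCChain.concat (h1 : IsCChain C a b A₁) (h2 : IsCChain C b c A₂) :
    IsCChain C a c (A₁ ∪ A₂) where
  mem_left := Or.inl h1.mem_left
  mem_right := Or.inr h2.mem_right
  le_left := fun x hx => hx.elim (h1.le_left x) (fun hx => h1.le.trans (h2.le_left x hx))
  le_right := fun x hx => hx.elim (fun hx => (h1.le_right x hx).trans h2.le) (h2.le_right x)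
  wo := fun B hB hne => by
    by_cases h' : (B ∩ A₁).Nonempty
    · obtain ⟨m, hmB, hml⟩ := h1.wo (B ∩ A₁) Set.inter_subset_right h'
      refine ⟨m, hmB.1, fun y hy => ?_⟩
      rcases hB hy with hy1 | hy2
      · exact hml ⟨hy, hy1⟩
      · exact (h1.le_right m hmB.2).trans (h2.le_left y hy2)
    · have hBA2 : B ⊆ A₂ := fun y hy => (hB hy).resolve_left fun h'' => h' ⟨y, hy, h''⟩
      exact h2.wo B hBA2 hne
  supClosed := fun B hB hne => by
    by_cases h' : (B ∩ A₂).Nonempty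
    · have : sSup B = sSup (B ∩ A₂) := by
        apply le_antisymm
        · apply sSup_le
          intro y hy
          rcases hB hy with hy1 | hy2
          · obtain ⟨z, hz⟩ := h'
            exact le_trans ((h1.le_right y hy1).trans (h2.le_left z hz.2)) (le_sSup hz)
          · exact le_sSup ⟨hy, hy2⟩
        · exact sSup_le_sSup Set.inter_subset_left
      rw [this]
      exact Or.inr (h2.supClosed _ Set.inter_subset_right h')
    · have hBA1 : B ⊆ A₁ := fun y hy => (hB hy).resolve_right fun h'' => h' ⟨y, hy, h''⟩
      exact Or.inl (h1.supClosed B hBA1 hne)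
  succ := fun x hx hxc => by
    by_cases hx2 : x ∈ A₂
    · obtain ⟨s, hsl, hsC⟩ := h2.succ x hx2 hxc
      refine ⟨s, ⟨⟨Or.inr hsl.1.1, hsl.1.2⟩, fun y hy => ?_⟩, hsC⟩
      rcases hy.1 with hy1 | hy2
      · exact absurd ((h2.le_left x hx2).trans_lt (hy.2.trans_le (h1.le_right y hy1)))
          (lt_irrefl b)
      · exact hsl.2 ⟨hy2, hy.2⟩
    · have hx1 : x ∈ A₁ := hx.resolve_right hx2
      have hxb : x ≠ b := fun h => hx2 (h ▸ h2.mem_left)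
      obtain ⟨s, hsl, hsC⟩ := h1.succ x hx1 hxb
      refine ⟨s, ⟨⟨Or.inl hsl.1.1, hsl.1.2⟩, fun y hy => ?_⟩, hsC⟩
      rcases hy.1 with hy1 | hy2
      · exact hsl.2 ⟨hy1, hy.2⟩
      · exact (h1.le_right s hsl.1.1).trans (h2.le_left y hy2)

theorem IsCChain.map (h : IsCChain C a b A) (f : L → L) (hmono : Monotone f)
    (hsup : ∀ B ⊆ A, B.Nonempty → f (sSup B) = sSup (f '' B))
    (hcomp : ∀ p ∈ C, (f p.1, f p.2) ∈ C) :
    IsCChain C (f a) (f b) (f '' A) where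
  mem_left := ⟨a, h.mem_left, rfl⟩
  mem_right := ⟨b, h.mem_right, rfl⟩
  le_left := by rintro _ ⟨x, hx, rfl⟩; exact hmono (h.le_left x hx)
  le_right := by rintro _ ⟨x, hx, rfl⟩; exact hmono (h.le_right x hx)
  wo := fun B' hB' hne => by
    set B : Set L := {x ∈ A | f x ∈ B'} with hBdef
    have hBA : B ⊆ A := Set.sep_subset _ _
    have hBne : B.Nonempty := by
      obtain ⟨y, hy⟩ := hne
      obtain ⟨x, hx, rfl⟩ := hB' hy
      exact ⟨x, hx, hy⟩
    obtain ⟨m, hmB, hml⟩ := h.wo B hBA hBne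
    refine ⟨f m, hmB.2, fun y hy => ?_⟩
    obtain ⟨x, hx, rfl⟩ := hB' hy
    exact hmono (hml ⟨hx, hy⟩)
  supClosed := fun B' hB' hne => by
    set B : Set L := {x ∈ A | f x ∈ B'} with hBdef
    have hBA : B ⊆ A := Set.sep_subset _ _
    have hBne : B.Nonempty := by
      obtain ⟨y, hy⟩ := hne
      obtain ⟨x, hx, rfl⟩ := hB' hy
      exact ⟨x, hx, hy⟩
    have hIm : B' = f '' B := by
      apply Set.Subset.antisymm
      · intro y hy
        obtain ⟨x, hx, rfl⟩ := hB' hy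
        exact ⟨x, ⟨hx, hy⟩, rfl⟩
      · rintro _ ⟨x, hx, rfl⟩; exact hx.2
    have : sSup B' = f (sSup B) := by rw [hsup B hBA hBne, hIm]
    rw [this]
    exact ⟨sSup B, h.supClosed B hBA hBne, rfl⟩
  succ := fun u hu hub => by
    obtain ⟨x₁, hx₁, rfl⟩ := hu
    set D : Set L := {x ∈ A | f x ≤ f x₁} with hDdef
    have hDA : D ⊆ A := Set.sep_subset _ _
    have hDne : D.Nonempty := ⟨x₁, hx₁, le_rfl⟩
    set x₀ : L := sSup D with hx₀def
    have hx₀A : x₀ ∈ A := h.supClosed D hDA hDne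
    have hfx₀ : f x₀ = f x₁ := by
      have h1 : f x₀ ≤ f x₁ := by
        rw [hx₀def, hsup D hDA hDne]
        apply sSup_le
        rintro _ ⟨x, hx, rfl⟩
        exact hx.2
      exact le_antisymm h1 (hmono (le_sSup (⟨hx₁, le_rfl⟩ : x₁ ∈ D)))
    have hx₀b : x₀ ≠ b := fun hh => hub (by rw [← hfx₀, hh])
    obtain ⟨s, hsl, hsC⟩ := h.succ x₀ hx₀A hx₀b
    have hx₀s : x₀ < s := hsl.1.2
    have hsD : s ∉ D := fun hs => absurd (le_sSup hs) (not_le_of_gt hx₀s)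
    have hfs : f x₁ < f s := by
      refine lt_of_le_of_ne (hfx₀ ▸ hmono hx₀s.le) fun he => hsD ⟨hsl.1.1, le_of_eq he.symm⟩
    refine ⟨f s, ⟨⟨⟨s, hsl.1.1, rfl⟩, hfs⟩, ?_⟩, ?_⟩
    · rintro _ ⟨⟨x, hx, rfl⟩, hlt⟩
      have hxD : x ∉ D := fun hxd => absurd hxd.2 (not_le_of_gt hlt)
      have hx₀x : x₀ < x := by
        rcases h.total hx hx₀A with h' | h'
        · exact absurd ⟨hx, (hmono h').trans hfx₀.le⟩ hxD
        · exact lt_of_le_of_ne h' fun he => hxD (he ▸ ⟨hx₀A, hfx₀.le⟩)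
      exact hmono (hsl.2 ⟨hx, hx₀x⟩)
    · have := hcomp (x₀, s) hsC
      rwa [hfx₀] at this



theorem PP.refl' (C : Set (L × L)) (a : L) : PP C a a := ⟨{a}, isCChain_singleton C a⟩

theorem PP.le' (h : PP C a b) : a ≤ b := by
  obtain ⟨A, hA⟩ := h; exact hA.le_right a hA.mem_left

theorem PP.trans' (h1 : PP C a b) (h2 : PP C b c) : PP C a c := by
  obtain ⟨A1, h1⟩ := h1; obtain ⟨A2, h2⟩ := h2
  exact ⟨A1 ∪ A2, h1.concat h2⟩

abbrev LatCong (C : Set (L × L)) : Prop :=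
  Equivalence (fun a b : L => (a, b) ∈ C) ∧
    ∀ p q : L × L, p ∈ C → q ∈ C →
      (p.1 ⊓ q.1, p.2 ⊓ q.2) ∈ C ∧ (p.1 ⊔ q.1, p.2 ⊔ q.2) ∈ C

theorem PP.inf' (hC : LatCong C) (h : PP C a b) (c : L) : PP C (a ⊓ c) (b ⊓ c) := by
  obtain ⟨A, hA⟩ := h
  refine ⟨_, hA.map (· ⊓ c) (fun x y hxy => inf_le_inf_right c hxy) ?_ ?_⟩
  · intro B hB hne
    simp only [sSup_image, sSup_inf_eq]
  · intro p hp
    exact (hC.2 p (c, c) hp (hC.1.refl c)).1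

theorem PP.sup' (hC : LatCong C) (h : PP C a b) (c : L) : PP C (a ⊔ c) (b ⊔ c) := by
  obtain ⟨A, hA⟩ := h
  refine ⟨_, hA.map (· ⊔ c) (fun x y hxy => sup_le_sup_right hxy c) ?_ ?_⟩
  · intro B hB hne
    obtain ⟨x₁, hx₁⟩ := hne
    apply le_antisymm
    · apply sup_le
      · exact sSup_le fun x hx => le_trans le_sup_left (le_sSup ⟨x, hx, rfl⟩)
      · exact le_trans le_sup_right (le_sSup ⟨x₁, hx₁, rfl⟩)
    · apply sSup_le
      rintro _ ⟨x, hx, rfl⟩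
      exact sup_le_sup_right (le_sSup hx) c
  · intro p hp
    exact (hC.2 p (c, c) hp (hC.1.refl c)).2

theorem PP.restrict' (hC : LatCong C) (h : PP C a b) (h1 : a ≤ a') (h2 : a' ≤ b') (h3 : b' ≤ b) :
    PP C a' b' := by
  have hs := h.sup' hC a'
  rw [sup_eq_right.2 h1, sup_eq_left.2 (h2.trans h3)] at hs
  have hi := hs.inf' hC b'
  rw [inf_eq_left.2 h2, inf_eq_right.2 h3] at hi
  -- (b ⊔ a') ⊓ b' = b'
  exact hi

theorem PP.join2' (hC : LatCong C) (h1 : PP C a b) (h2 : PP C a c) : PP C a (b ⊔ c) := by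
  have h3 := h2.sup' hC b
  rw [sup_eq_right.2 h1.le', sup_comm c b] at h3
  exact h1.trans' h3


theorem PP.sup_sSup' (hC : LatCong C) (a : L) (T : Set L) (hT : ∀ b ∈ T, PP C a b) :
    PP C a (a ⊔ sSup T) := by
  set v : L := a ⊔ sSup T with hv
  set 𝒜 : Set (Set L) := {A | IsCChain C a (sSup A) A ∧ ∀ x ∈ A, x ≤ v} with h𝒜
  let α := {A : Set L // A ∈ 𝒜}
  let r : α → α → Prop := fun A A' => A.1 ⊆ A'.1 ∧ ∀ x ∈ A'.1, x ∉ A.1 → ∀ y ∈ A.1, y ≤ x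
  have hA₀ : ({a} : Set L) ∈ 𝒜 := by
    constructor
    · rw [sSup_singleton]; exact isCChain_singleton C a
    · intro x hx; rw [Set.mem_singleton_iff] at hx; subst hx; exact le_sup_left
  have hrtrans : ∀ {X Y Z : α}, r X Y → r Y Z → r X Z := by
    rintro X Y Z ⟨h12, h12'⟩ ⟨h23, h23'⟩
    refine ⟨h12.trans h23, fun x hx hx1 y hy => ?_⟩
    by_cases hx2 : x ∈ Y.1
    · exact h12' x hx2 hx1 y hy
    · exact h23' x hx hx2 y (h12 hy)
  have hbound : ∀ 𝒞 : Set α, IsChain r 𝒞 → ∃ ub, ∀ X ∈ 𝒞, r X ub := by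
    intro 𝒞 hchain
    rcases Set.eq_empty_or_nonempty 𝒞 with rfl | ⟨A₀, hA₀m⟩
    · exact ⟨⟨{a}, hA₀⟩, fun X hX => absurd hX (Set.notMem_empty X)⟩
    have hcomp : ∀ A₁ ∈ 𝒞, ∀ A₂ ∈ 𝒞, r A₁ A₂ ∨ r A₂ A₁ := by
      intro A₁ h₁ A₂ h₂
      rcases eq_or_ne A₁ A₂ with rfl | hne
      · exact Or.inl ⟨subset_rfl, fun x hx hx' => absurd hx hx'⟩
      · exact hchain h₁ h₂ hne
    have hdom : ∀ A₁ ∈ 𝒞, ∀ A₂ ∈ 𝒞, ∀ x ∈ A₂.1, x ∉ A₁.1 → ∀ y ∈ A₁.1, y ≤ x := by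
      intro A₁ h₁ A₂ h₂ x hx hx1 y hy
      rcases hcomp A₁ h₁ A₂ h₂ with h' | h'
      · exact h'.2 x hx hx1 y hy
      · exact absurd (h'.1 hx) hx1
    set U : Set L := ⋃ X ∈ 𝒞, (X : α).1 with hU
    have hUmem : ∀ x, x ∈ U ↔ ∃ X ∈ 𝒞, x ∈ (X : α).1 := by
      intro x; simp [hU]
    set m : L := sSup U with hm
    set Astar : Set L := insert m U with hAstar
    have hUv : ∀ x ∈ U, x ≤ v := by
      intro x hx
      obtain ⟨X, hX, hxX⟩ := (hUmem x).1 hx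
      exact X.2.2 x hxX
    have hmv : m ≤ v := sSup_le hUv
    have haU : a ∈ U := (hUmem a).2 ⟨A₀, hA₀m, A₀.2.1.mem_left⟩
    have hsA : sSup Astar = m := by
      rw [hAstar, sSup_insert]
      exact sup_eq_left.2 le_rfl
    have hAstarmem : Astar ∈ 𝒜 := by
      constructor
      · constructor
        · exact Or.inr haU
        · rw [hsA]; exact Or.inl rfl
        · intro x hx
          rcases hx with rfl | hx
          · exact le_sSup haU
          · obtain ⟨X, hX, hxX⟩ := (hUmem x).1 hx
            exact X.2.1.le_left x hxX
        · intro x hx; exact le_sSup hx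
        · -- wo
          intro B hB hne
          by_cases hBU : (B ∩ U).Nonempty
          · obtain ⟨b₀, hb₀B, hb₀U⟩ := hBU
            obtain ⟨A₁, hA₁m, hb₀A₁⟩ := (hUmem b₀).1 hb₀U
            obtain ⟨m₀, hm₀B, hm₀l⟩ := A₁.2.1.wo (B ∩ A₁.1) Set.inter_subset_right
              ⟨b₀, hb₀B, hb₀A₁⟩
            refine ⟨m₀, hm₀B.1, fun y hy => ?_⟩
            have hm₀U : m₀ ∈ U := (hUmem m₀).2 ⟨A₁, hA₁m, hm₀B.2⟩
            rcases hB hy with rfl | hyU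
            · exact le_sSup hm₀U
            · obtain ⟨A₂, hA₂m, hyA₂⟩ := (hUmem y).1 hyU
              by_cases hyA₁ : y ∈ A₁.1
              · exact hm₀l ⟨hy, hyA₁⟩
              · exact hdom A₁ hA₁m A₂ hA₂m y hyA₂ hyA₁ m₀ hm₀B.2
          · have hBm : ∀ y ∈ B, y = m := by
              intro y hy
              rcases hB hy with rfl | hyU
              · rfl
              · exact absurd ⟨hy, hyU⟩ (fun h => hBU ⟨y, h⟩)
            obtain ⟨y₀, hy₀⟩ := hne
            refine ⟨m, (hBm y₀ hy₀) ▸ hy₀, fun y hy => le_of_eq (hBm y hy).symm⟩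
        · -- supClosed
          intro B hB hne
          by_cases hex : ∃ X ∈ 𝒞, B ⊆ (X : α).1
          · obtain ⟨X, hXm, hBX⟩ := hex
            exact Or.inr ((hUmem _).2 ⟨X, hXm, X.2.1.supClosed B hBX hne⟩)
          · have hBle : ∀ y ∈ B, y ≤ m := by
              intro y hy
              rcases hB hy with rfl | hyU
              · exact le_rfl
              · exact le_sSup hyU
            have : sSup B = m := by
              apply le_antisymm (sSup_le hBle)
              apply sSup_le
              intro x hx
              obtain ⟨X, hXm, hxX⟩ := (hUmem x).1 hx
              have : ¬ B ⊆ X.1 := fun hsub => hex ⟨X, hXm, hsub⟩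
              obtain ⟨y, hyB, hyX⟩ := Set.not_subset.1 this
              rcases hB hyB with rfl | hyU
              · exact le_trans (le_sSup hx) (le_sSup hyB)
              · obtain ⟨Y, hYm, hyY⟩ := (hUmem y).1 hyU
                exact le_trans (hdom X hXm Y hYm y hyY hyX x hxX) (le_sSup hyB)
            rw [this]; exact Or.inl rfl
        · -- succ
          intro x hx hxtop
          rw [hsA] at hxtop
          have hxU : x ∈ U := hx.resolve_left hxtop
          obtain ⟨A₁, hA₁m, hxA₁⟩ := (hUmem x).1 hxU
          have hylt : ∃ y ∈ U, ¬ y ≤ x := by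
            by_contra h'
            push_neg at h'
            exact hxtop (le_antisymm (le_sSup hxU) (sSup_le h'))
          obtain ⟨y, hyU, hyx⟩ := hylt
          obtain ⟨A₂, hA₂m, hyA₂⟩ := (hUmem y).1 hyU
          obtain ⟨A₃, hA₃m, hxA₃, hyA₃⟩ : ∃ X ∈ 𝒞, x ∈ (X : α).1 ∧ y ∈ (X : α).1 := by
            rcases hcomp A₁ hA₁m A₂ hA₂m with h' | h'
            · exact ⟨A₂, hA₂m, h'.1 hxA₁, hyA₂⟩
            · exact ⟨A₁, hA₁m, hxA₁, h'.1 hyA₂⟩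
          have hxne : x ≠ sSup A₃.1 := by
            intro h'
            exact hyx (h' ▸ le_sSup hyA₃)
          obtain ⟨s, hsl, hsC⟩ := A₃.2.1.succ x hxA₃ hxne
          have hsU : s ∈ U := (hUmem s).2 ⟨A₃, hA₃m, hsl.1.1⟩
          refine ⟨s, ⟨⟨Or.inr hsU, hsl.1.2⟩, fun z hz => ?_⟩, hsC⟩
          obtain ⟨hzA, hxz⟩ := hz
          rcases hzA with rfl | hzU
          · exact le_sSup hsU
          · obtain ⟨A₄, hA₄m, hzA₄⟩ := (hUmem z).1 hzU
            by_cases hzA₃ : z ∈ A₃.1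
            · exact hsl.2 ⟨hzA₃, hxz⟩
            · exact hdom A₃ hA₃m A₄ hA₄m z hzA₄ hzA₃ s hsl.1.1
      · intro x hx
        rcases hx with rfl | hx
        · exact hmv
        · exact hUv x hx
    refine ⟨⟨Astar, hAstarmem⟩, fun X hX => ⟨?_, ?_⟩⟩
    · intro x hx
      exact Or.inr ((hUmem x).2 ⟨X, hX, hx⟩)
    · intro x hx hxX y hy
      rcases hx with rfl | hxU
      · exact le_sSup ((hUmem y).2 ⟨X, hX, hy⟩)
      · obtain ⟨A₁, hA₁m, hxA₁⟩ := (hUmem x).1 hxU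
        exact hdom X hX A₁ hA₁m x hxA₁ hxX y hy
  obtain ⟨M, hM⟩ := exists_maximal_of_chains_bounded hbound (fun {X Y Z} => hrtrans)
  set b₀ : L := sSup M.1 with hb₀
  have hab₀ : a ≤ b₀ := le_sSup M.2.1.mem_left
  have hb₀v : b₀ ≤ v := sSup_le M.2.2
  have hfin : b₀ = v := by
    by_contra hne
    have ht : ∃ t ∈ T, ¬ t ≤ b₀ := by
      by_contra h'
      push_neg at h'
      exact hne (le_antisymm hb₀v (sup_le hab₀ (sSup_le h')))
    obtain ⟨t, htT, htb₀⟩ := ht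
    have h1 : PP C (a ⊔ b₀) (t ⊔ b₀) := (hT t htT).sup' hC b₀
    rw [sup_eq_right.2 hab₀] at h1
    obtain ⟨A', hA'⟩ := h1
    have hN : IsCChain C a (t ⊔ b₀) (M.1 ∪ A') := M.2.1.concat hA'
    have hsupN : sSup (M.1 ∪ A') = t ⊔ b₀ :=
      le_antisymm (sSup_le hN.le_right) (le_sSup hN.mem_right)
    have hNmem : (M.1 ∪ A') ∈ 𝒜 := by
      constructor
      · rw [hsupN]; exact hN
      · intro x hx
        exact le_trans (hN.le_right x hx)
          (sup_le (le_trans (le_sSup htT) le_sup_right) hb₀v)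
    have hrMN : r M ⟨M.1 ∪ A', hNmem⟩ := by
      refine ⟨Set.subset_union_left, fun x hx hxM y hy => ?_⟩
      rcases hx with hx | hx
      · exact absurd hx hxM
      · exact le_trans (le_sSup hy) (hA'.le_left x hx)
    have := (hM _ hrMN).1
    have htop : t ⊔ b₀ ∈ M.1 := this (Or.inr hA'.mem_right)
    exact htb₀ (le_trans le_sup_left (le_sSup htop))
  exact ⟨M.1, hfin ▸ M.2.1⟩


theorem pair_chain (hab : a ≤ b) (hCab : (a, b) ∈ C) : IsCChain C a b {a, b} where
  mem_left := Or.inl rfl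
  mem_right := Or.inr rfl
  le_left := by rintro x (rfl | rfl); exacts [le_rfl, hab]
  le_right := by rintro x (rfl | rfl); exacts [hab, le_rfl]
  wo := fun B hB hne => by
    by_cases ha : a ∈ B
    · refine ⟨a, ha, fun y hy => ?_⟩
      rcases hB hy with rfl | rfl
      exacts [le_rfl, hab]
    · obtain ⟨y, hy⟩ := hne
      have hyb : y = b := by rcases hB hy with rfl | rfl; exacts [absurd hy ha, rfl]
      subst hyb
      refine ⟨y, hy, fun z hz => ?_⟩
      rcases hB hz with rfl | rfl
      exacts [absurd hz ha, le_rfl]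
  supClosed := fun B hB hne => by
    by_cases hb : b ∈ B
    · have : sSup B = b := by
        apply le_antisymm
        · apply sSup_le; intro y hy; rcases hB hy with rfl | rfl; exacts [hab, le_rfl]
        · exact le_sSup hb
      rw [this]; exact Or.inr rfl
    · have hBa : B = {a} := by
        apply Set.Subset.antisymm
        · intro y hy; rcases hB hy with rfl | rfl; exacts [rfl, absurd hy hb]
        · obtain ⟨y, hy⟩ := hne
          have : y = a := by rcases hB hy with rfl | rfl; exacts [rfl, absurd hy hb]
          subst this
          intro z hz; rwa [Set.mem_singleton_iff.1 hz]
      rw [hBa, sSup_singleton]; exact Or.inl rfl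
  succ := fun x hx hxb => by
    have hxa : x = a := by rcases hx with rfl | rfl; exacts [rfl, absurd rfl hxb]
    subst hxa
    have hne : x ≠ b := hxb
    refine ⟨b, ⟨⟨Or.inr rfl, lt_of_le_of_ne hab hne⟩, fun y hy => ?_⟩, hCab⟩
    rcases hy.1 with rfl | rfl
    · exact absurd hy.2 (lt_irrefl _)
    · exact le_rfl

theorem mem_C_inf_sup (hC : LatCong C) (hxy : (a, b) ∈ C) : (a ⊓ b, a ⊔ b) ∈ C := by
  have h1 : (a ⊓ b, b) ∈ C := by
    have := (hC.2 (a, b) (b, b) hxy (hC.1.refl b)).1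
    simpa using this
  have h2 : (a, a ⊔ b) ∈ C := by
    have := (hC.2 (a, a) (a, b) (hC.1.refl a) hxy).2
    simpa using this
  exact hC.1.trans h1 (hC.1.trans (hC.1.symm hxy) h2)

theorem C_subset_G (hC : LatCong C) (hxy : (a, b) ∈ C) : PP C (a ⊓ b) (a ⊔ b) :=
  ⟨{a ⊓ b, a ⊔ b}, pair_chain inf_le_sup (mem_C_inf_sup hC hxy)⟩

-- G transitivity core
theorem G_trans (hC : LatCong C) {x y z : L} (hxy : PP C (x ⊓ y) (x ⊔ y)) (hyz : PP C (y ⊓ z) (y ⊔ z)) :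
    PP C (x ⊓ z) (x ⊔ z) := by
  set m : L := x ⊓ y ⊓ z with hm
  set w : L := (x ⊓ y) ⊔ (y ⊓ z) with hw
  set v : L := x ⊔ y ⊔ z with hv
  have h2m : PP C m (x ⊓ y) := by
    have := hyz.inf' hC (x ⊓ y)
    have e1 : (y ⊓ z) ⊓ (x ⊓ y) = m := by rw [hm]; ac_rfl
    have e2 : (y ⊔ z) ⊓ (x ⊓ y) = x ⊓ y := inf_eq_right.2 (le_trans inf_le_right le_sup_left)
    rwa [e1, e2] at this
  have h1m : PP C m (y ⊓ z) := by
    have := hxy.inf' hC (y ⊓ z)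
    have e1 : (x ⊓ y) ⊓ (y ⊓ z) = m := by rw [hm]; ac_rfl
    have e2 : (x ⊔ y) ⊓ (y ⊓ z) = y ⊓ z := inf_eq_right.2 (le_trans inf_le_left le_sup_right)
    rwa [e1, e2] at this
  have hmw : PP C m w := PP.join2' hC h2m h1m
  have hw1 : PP C w (x ⊔ y) := by
    have := hxy.sup' hC (y ⊓ z)
    have e2 : (x ⊔ y) ⊔ (y ⊓ z) = x ⊔ y := sup_eq_left.2 (le_trans inf_le_left le_sup_right)
    rwa [e2] at this
  have hw2 : PP C w (y ⊔ z) := by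
    have := hyz.sup' hC (x ⊓ y)
    have e1 : (y ⊓ z) ⊔ (x ⊓ y) = w := by rw [hw]; ac_rfl
    have e2 : (y ⊔ z) ⊔ (x ⊓ y) = y ⊔ z := sup_eq_left.2 (le_trans inf_le_right le_sup_left)
    rwa [e1, e2] at this
  have hwv : PP C w v := by
    have := PP.join2' hC hw1 hw2
    have e : (x ⊔ y) ⊔ (y ⊔ z) = v := by rw [hv]; ac_rfl
    rwa [e] at this
  have hmv : PP C m v := hmw.trans' hwv
  exact hmv.restrict' hC (le_inf (le_trans inf_le_left inf_le_left) inf_le_right)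
    inf_le_sup (sup_le (le_trans le_sup_left le_sup_left) le_sup_right)

theorem G_inf_right (hC : LatCong C) {x y z : L} (hxy : PP C (x ⊓ y) (x ⊔ y)) :
    PP C ((x ⊓ z) ⊓ (y ⊓ z)) ((x ⊓ z) ⊔ (y ⊓ z)) := by
  have h := hxy.inf' hC z
  refine h.restrict' hC (le_of_eq ?_) inf_le_sup
    (sup_le (inf_le_inf le_sup_left le_rfl) (inf_le_inf le_sup_right le_rfl))
  exact inf_inf_distrib_right x y z

theorem G_sup_right (hC : LatCong C) {x y z : L} (hxy : PP C (x ⊓ y) (x ⊔ y)) :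
    PP C ((x ⊔ z) ⊓ (y ⊔ z)) ((x ⊔ z) ⊔ (y ⊔ z)) := by
  have h := hxy.sup' hC z
  refine h.restrict' hC (le_inf (sup_le_sup inf_le_left le_rfl)
    (sup_le_sup inf_le_right le_rfl)) inf_le_sup (le_of_eq ?_)
  exact (sup_sup_distrib_right x y z).symm


end FrameCongProof


open FrameCongProof in
/-- If the frame congruence generated by a lattice congruence `C` is everything,
then there is a join-closed well-ordered cover `A` (with `⊤ ∈ A`) such that each
element of `A` other than `⊤` is `C`-related to its successor in `A`. -/
theorem exists_wellOrdered_joinClosed_cover_of_frameCongGen_eq_univ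
    {L : Type u} [Order.Frame L] (C : Set (L × L)) (hC : IsLatticeCongruence C)
    (h : frameCongGen C = Set.univ) :
    ∃ A : Set L,
      (∀ B ⊆ A, B.Nonempty → ∃ b, IsLeast B b) ∧
      (∀ B ⊆ A, sSup B ∈ A) ∧
      ⊤ ∈ A ∧
      ∀ a ∈ A, a ≠ ⊤ → ∃ s, IsLeast {x | x ∈ A ∧ a < x} s ∧ (a, s) ∈ C := by
  have hC' : LatCong C := hC
  set G : Set (L × L) := {p : L × L | PP C (p.1 ⊓ p.2) (p.1 ⊔ p.2)} with hG
  have hGmem : ∀ x y : L, (x, y) ∈ G ↔ PP C (x ⊓ y) (x ⊔ y) := fun x y => Iff.rfl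
  have hGfc : IsFrameCongruence G := by
    refine ⟨⟨?_, ?_, ?_⟩, ?_, ?_⟩
    · intro x
      show PP C (x ⊓ x) (x ⊔ x)
      rw [inf_idem, sup_idem]; exact PP.refl' C x
    · intro x y hxy
      show PP C (y ⊓ x) (y ⊔ x)
      rw [inf_comm, sup_comm]; exact hxy
    · intro x y z hxy hyz
      exact G_trans hC' hxy hyz
    · rintro ⟨x, y⟩ ⟨z, w⟩ hp hq
      show PP C ((x ⊓ z) ⊓ (y ⊓ w)) ((x ⊓ z) ⊔ (y ⊓ w))
      have h1 : PP C ((x ⊓ z) ⊓ (y ⊓ z)) ((x ⊓ z) ⊔ (y ⊓ z)) := G_inf_right hC' hp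
      have h2 : PP C ((y ⊓ z) ⊓ (y ⊓ w)) ((y ⊓ z) ⊔ (y ⊓ w)) := by
        have := G_inf_right hC' (hq : PP C (z ⊓ w) (z ⊔ w)) (z := y)
        rwa [inf_comm z y, inf_comm w y] at this
      exact G_trans hC' h1 h2
    · intro S hS
      set s : L := sSup (Prod.fst '' S) with hs
      set t : L := sSup (Prod.snd '' S) with ht
      set u : L := s ⊓ t with hu
      set T : Set L := (fun p : L × L => p.1 ⊔ p.2 ⊔ u) '' S with hT
      have hTP : ∀ b ∈ T, PP C u b := by
        rintro _ ⟨⟨x, y⟩, hpS, rfl⟩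
        have hxy : PP C (x ⊓ y) (x ⊔ y) := hS hpS
        have hxs : x ∈ Prod.fst '' S := Set.mem_image_of_mem Prod.fst hpS
        have hyt : y ∈ Prod.snd '' S := Set.mem_image_of_mem Prod.snd hpS
        have hle : x ⊓ y ≤ u := le_inf
          (inf_le_left.trans (le_sSup hxs))
          (inf_le_right.trans (le_sSup hyt))
        have := hxy.sup' hC' u
        rwa [sup_eq_right.2 hle] at this
      have hmain := PP.sup_sSup' hC' u T hTP
      have hkey : u ⊔ sSup T = s ⊔ t := by
        apply le_antisymm
        · apply sup_le (le_trans inf_le_left le_sup_left)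
          apply sSup_le
          rintro _ ⟨⟨x, y⟩, hpS, rfl⟩
          refine sup_le (sup_le ?_ ?_) (le_trans inf_le_left le_sup_left)
          · exact le_trans (le_sSup (Set.mem_image_of_mem Prod.fst hpS)) le_sup_left
          · exact le_trans (le_sSup (Set.mem_image_of_mem Prod.snd hpS)) le_sup_right
        · have hsT : s ≤ sSup T := by
            apply sSup_le
            rintro _ ⟨⟨x, y⟩, hpS, rfl⟩
            exact le_trans (le_sup_left.trans le_sup_left)
              (le_sSup (Set.mem_image_of_mem (fun p : L × L => p.1 ⊔ p.2 ⊔ u) hpS))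
          have htT : t ≤ sSup T := by
            apply sSup_le
            rintro _ ⟨⟨x, y⟩, hpS, rfl⟩
            exact le_trans (le_sup_right.trans le_sup_left)
              (le_sSup (Set.mem_image_of_mem (fun p : L × L => p.1 ⊔ p.2 ⊔ u) hpS))
          exact sup_le (hsT.trans le_sup_right) (htT.trans le_sup_right)
      show PP C (s ⊓ t) (s ⊔ t)
      rw [← hkey]
      exact hmain
  have hCG : C ⊆ G := by
    rintro ⟨x, y⟩ hp
    exact C_subset_G hC' hp
  have hsub : frameCongGen C ⊆ G := Set.sInter_subset_of_mem ⟨hGfc, hCG⟩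
  have hbt : ((⊥ : L), (⊤ : L)) ∈ G := hsub (h ▸ Set.mem_univ _)
  have hPP : PP C (⊥ : L) (⊤ : L) := by
    have := hbt
    rwa [hGmem, bot_inf_eq, bot_sup_eq] at this
  obtain ⟨A, hA⟩ := hPP
  refine ⟨A, hA.wo, ?_, hA.mem_right, ?_⟩
  · intro B hB
    rcases B.eq_empty_or_nonempty with rfl | hne
    · rw [sSup_empty]; exact hA.mem_left
    · exact hA.supClosed B hB hne
  · intro x hx hxtop
    exact hA.succ x hx hxtop
end

section
/- Let L be a frame. The frame of frame congruences on L is ultraparacompact: for every set S of frame congruences on L whose join is all of L × L (i.e. the frame congruence generated by ⋃S is L × L), there exists a set P of frame congruences on L such that (i) for any two distinct members p, q ∈ P, p ∩ q is the diagonal {(x,x) : x ∈ L}; (ii) the frame congruence generated by ⋃P is all of L × L; and (iii) every member of P is contained in some member of S. -/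
universe u

/-!
Write `Δ a = openCong a` and `∇ a = closedCong a`, and let `R = ⋃₀ S`. The elements `y` with
`a ⊓ u ≤ y ↔ b ⊓ u ≤ y` for all `(a, b) ∈ R` and all `u` form the sublocale of
`frameCongGen R = univ`, which is `{⊤}`; in particular every `x` with `c ≤ x → d ≤ x` for all
`(c, d) ∈ R` is `⊤`. So iterating `x ↦ ⋁ {d | (c, d) ∈ R, c ≤ x}` transfinitely from `⊥` reaches
`⊤`. Ranking each pair `(c, d) ∈ R` by the first stage lying above `c` and breaking ties
arbitrarily well-orders `R` so that `c` lies below the join `e` of the earlier second components.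
The pieces `Δ e ∩ ∇ d` form the partition: they are pairwise disjoint because `∇ a ∩ Δ a` is the
diagonal, each lies in `Δ c ∩ ∇ d ⊆ s`, and by well-founded induction every `(⊥, d)` lies in the
congruence they generate, hence so does `(⊥, ⊤)`.
-/

open Set

namespace IsFrameCongruence

variable {L : Type u} [Order.Frame L] {C : Set (L × L)}

theorem refl (hC : IsFrameCongruence C) (x : L) : (x, x) ∈ C := hC.1.refl x

theorem symm (hC : IsFrameCongruence C) {x y : L} (h : (x, y) ∈ C) : (y, x) ∈ C := hC.1.symm h

theorem trans (hC : IsFrameCongruence C) {x y z : L} (hxy : (x, y) ∈ C) (hyz : (y, z) ∈ C) :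
    (x, z) ∈ C :=
  hC.1.trans hxy hyz

theorem inf (hC : IsFrameCongruence C) {a b c d : L} (hab : (a, b) ∈ C) (hcd : (c, d) ∈ C) :
    (a ⊓ c, b ⊓ d) ∈ C :=
  hC.2.1 _ _ hab hcd

theorem iSup (hC : IsFrameCongruence C) {κ : Type*} {f : κ → L × L} (hf : ∀ k, f k ∈ C) :
    (⨆ k, (f k).1, ⨆ k, (f k).2) ∈ C := by
  have h := hC.2.2 (range f) (range_subset_iff.2 hf)
  rwa [← range_comp, ← range_comp, sSup_range, sSup_range] at h

theorem sup (hC : IsFrameCongruence C) {a b c d : L} (hab : (a, b) ∈ C) (hcd : (c, d) ∈ C) :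
    (a ⊔ c, b ⊔ d) ∈ C := by
  simpa [iSup_bool_eq] using hC.iSup (f := fun i : Bool => bif i then (a, b) else (c, d))
    (Bool.forall_bool.2 ⟨hcd, hab⟩)

theorem sInter {𝒞 : Set (Set (L × L))} (h𝒞 : ∀ C ∈ 𝒞, IsFrameCongruence C) :
    IsFrameCongruence (⋂₀ 𝒞) := by
  refine ⟨⟨fun x C hC => (h𝒞 C hC).refl x, fun h C hC => (h𝒞 C hC).symm (h C hC),
    fun h h' C hC => (h𝒞 C hC).trans (h C hC) (h' C hC)⟩, ?_, ?_⟩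
  · exact fun p q hp hq C hC => (h𝒞 C hC).2.1 p q (hp C hC) (hq C hC)
  · exact fun T hT C hC => (h𝒞 C hC).2.2 T fun p hp => hT hp C hC

theorem inter {D : Set (L × L)} (hC : IsFrameCongruence C) (hD : IsFrameCongruence D) :
    IsFrameCongruence (C ∩ D) := by
  rw [← sInter_pair]
  exact sInter (by simp [hC, hD])

theorem eq_univ_of_bot_top (hC : IsFrameCongruence C) (h : ((⊥ : L), (⊤ : L)) ∈ C) :
    C = univ := by
  have mem_top (x : L) : (x, (⊤ : L)) ∈ C := by
    simpa using hC.sup (hC.refl x) h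
  exact eq_univ_of_forall fun ⟨x, y⟩ => hC.trans (mem_top x) (hC.symm (mem_top y))

end IsFrameCongruence

section Generated

variable {L : Type u} [Order.Frame L] {R C : Set (L × L)}

theorem isFrameCongruence_frameCongGen (R : Set (L × L)) : IsFrameCongruence (frameCongGen R) :=
  IsFrameCongruence.sInter fun _ hC => hC.1

theorem subset_frameCongGen (R : Set (L × L)) : R ⊆ frameCongGen R :=
  fun _ hp _ hC => hC.2 hp

theorem frameCongGen_subset (hC : IsFrameCongruence C) (h : R ⊆ C) : frameCongGen R ⊆ C :=
  sInter_subset_of_mem ⟨hC, h⟩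

end Generated

section Sublocale

variable {L : Type u} [Order.Frame L]

/-- When `Y` is a sublocale, this is its associated congruence. -/
def sublocaleCong (Y : Set L) : Set (L × L) := {p | ∀ y ∈ Y, p.1 ≤ y ↔ p.2 ≤ y}

theorem isFrameCongruence_sublocaleCong {Y : Set L} (hY : ∀ a, ∀ y ∈ Y, a ⇨ y ∈ Y) :
    IsFrameCongruence (sublocaleCong Y) := by
  refine ⟨⟨fun _ _ _ => Iff.rfl, fun h y hy => (h y hy).symm,
    fun h h' y hy => (h y hy).trans (h' y hy)⟩, ?_, ?_⟩
  · rintro ⟨a, b⟩ ⟨c, d⟩ hab hcd y hy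
    calc a ⊓ c ≤ y ↔ a ≤ c ⇨ y := le_himp_iff.symm
      _ ↔ b ≤ c ⇨ y := hab _ (hY c y hy)
      _ ↔ c ≤ b ⇨ y := by rw [le_himp_iff, le_himp_iff, inf_comm]
      _ ↔ d ≤ b ⇨ y := hcd _ (hY b y hy)
      _ ↔ b ⊓ d ≤ y := by rw [le_himp_iff, inf_comm]
  · intro T hT y hy
    simp only [sSup_le_iff, forall_mem_image]
    exact forall₂_congr fun p hp => hT hp y hy

theorem eq_top_of_frameCongGen_eq_univ {R : Set (L × L)} (hR : frameCongGen R = univ) {x : L}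
    (hx : ∀ p ∈ R, ∀ u, p.1 ⊓ u ≤ x ↔ p.2 ⊓ u ≤ x) : x = ⊤ := by
  -- `Y` is the sublocale of `frameCongGen R`.
  set Y := {y : L | ∀ p ∈ R, ∀ u, p.1 ⊓ u ≤ y ↔ p.2 ⊓ u ≤ y}
  have hY : ∀ a, ∀ y ∈ Y, a ⇨ y ∈ Y := fun a y hy p hp u => by
    simpa only [le_himp_iff, inf_assoc] using hy p hp (u ⊓ a)
  have hRY : R ⊆ sublocaleCong Y := fun p hp y hy => by simpa using hy p hp ⊤
  have hbt : ((⊥ : L), (⊤ : L)) ∈ sublocaleCong Y :=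
    frameCongGen_subset (isFrameCongruence_sublocaleCong hY) hRY (hR ▸ mem_univ _)
  exact top_le_iff.1 ((hbt x hx).1 bot_le)

end Sublocale

section OpenClosed

variable {L : Type u} [Order.Frame L]

def openCong (a : L) : Set (L × L) := {p | p.1 ⊓ a = p.2 ⊓ a}

def closedCong (a : L) : Set (L × L) := {p | p.1 ⊔ a = p.2 ⊔ a}

theorem openCong_eq_sublocaleCong (a : L) : openCong a = sublocaleCong (range (a ⇨ ·)) := by
  ext ⟨x, y⟩
  simp only [openCong, sublocaleCong, mem_ofPred_eq, forall_mem_range, le_himp_iff]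
  exact ⟨fun h z => by rw [h], eq_of_forall_ge_iff⟩

theorem closedCong_eq_sublocaleCong (a : L) : closedCong a = sublocaleCong (Ici a) := by
  ext ⟨x, y⟩
  have sup_le_iff_of_le {z : L} (w : L) (hz : a ≤ z) : w ⊔ a ≤ z ↔ w ≤ z := by
    simp [hz]
  simp only [closedCong, sublocaleCong, mem_ofPred_eq, mem_Ici]
  refine ⟨fun h z hz => ?_, fun h => eq_of_forall_ge_iff fun z => ?_⟩
  · rw [← sup_le_iff_of_le x hz, ← sup_le_iff_of_le y hz, h]
  · simp only [sup_le_iff]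
    exact ⟨fun hxz => ⟨(h z hxz.2).1 hxz.1, hxz.2⟩, fun hyz => ⟨(h z hyz.2).2 hyz.1, hyz.2⟩⟩

theorem isFrameCongruence_openCong (a : L) : IsFrameCongruence (openCong a) := by
  rw [openCong_eq_sublocaleCong]
  refine isFrameCongruence_sublocaleCong ?_
  rintro c _ ⟨z, rfl⟩
  exact ⟨c ⇨ z, by dsimp only; rw [himp_himp, himp_himp, inf_comm]⟩

theorem isFrameCongruence_closedCong (a : L) : IsFrameCongruence (closedCong a) := by
  rw [closedCong_eq_sublocaleCong]
  exact isFrameCongruence_sublocaleCong fun c z hz => le_himp_iff.2 (inf_le_left.trans hz)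

theorem openCong_anti {a b : L} (h : a ≤ b) : openCong b ⊆ openCong a := by
  intro p (hp : p.1 ⊓ b = p.2 ⊓ b)
  show p.1 ⊓ a = p.2 ⊓ a
  rw [← inf_eq_right.2 h, ← inf_assoc, hp, inf_assoc]

theorem closedCong_inter_openCong (a : L) : closedCong a ∩ openCong a = diagonal L := by
  ext ⟨x, y⟩
  exact ⟨fun ⟨hsup, hinf⟩ => eq_of_inf_eq_sup_eq hinf hsup, fun (h : x = y) => by
    subst h; exact ⟨rfl, rfl⟩⟩

theorem openCong_inter_closedCong_subset {s : Set (L × L)} (hs : IsFrameCongruence s) {c d : L}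
    (hcd : (c, d) ∈ s) : openCong c ∩ closedCong d ⊆ s := by
  rintro ⟨x, y⟩ ⟨hc : x ⊓ c = y ⊓ c, hd : x ⊔ d = y ⊔ d⟩
  have mem_sup_inf {x y : L} (h : x ⊓ c = y ⊓ c) : (x, x ⊔ y ⊓ d) ∈ s := by
    have h' := hs.inf (hs.refl y) hcd
    rw [← h] at h'
    simpa using hs.sup (hs.refl x) h'
  have hswap : x ⊔ y ⊓ d = y ⊔ x ⊓ d := by
    rw [sup_inf_left, sup_inf_left, hd, sup_comm x y]
  have hx := mem_sup_inf hc
  rw [hswap] at hx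
  exact hs.trans hx (hs.symm (mem_sup_inf hc.symm))

end OpenClosed

section Pieces

variable {L : Type u} [Order.Frame L] {ι : Type*} (r : ι → ι → Prop) (d : ι → L)

def predSup (i : ι) : L := ⨆ (j) (_ : r j i), d j

def piece (i : ι) : Set (L × L) := openCong (predSup r d i) ∩ closedCong (d i)

variable {r d}

theorem isFrameCongruence_piece (i : ι) : IsFrameCongruence (piece r d i) :=
  (isFrameCongruence_openCong _).inter (isFrameCongruence_closedCong _)

theorem piece_inter_piece_of_rel {i j : ι} (h : r j i) :
    piece r d i ∩ piece r d j = diagonal L := by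
  refine Subset.antisymm ?_ ?_
  · rintro p ⟨⟨hi, -⟩, -, hj⟩
    rw [← closedCong_inter_openCong (d j)]
    exact ⟨hj, openCong_anti (le_iSup₂ (f := fun j (_ : r j i) => d j) j h) hi⟩
  · rintro ⟨x, y⟩ (rfl : x = y)
    exact ⟨(isFrameCongruence_piece i).refl x, (isFrameCongruence_piece j).refl x⟩

theorem piece_inter_piece [Std.Trichotomous r] {i j : ι} (h : i ≠ j) :
    piece r d i ∩ piece r d j = diagonal L := by
  rcases trichotomous_of r i j with hij | rfl | hji
  · rw [inter_comm, piece_inter_piece_of_rel hij]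
  · exact absurd rfl h
  · exact piece_inter_piece_of_rel hji

theorem bot_mem_of_piece_subset [IsWellFounded ι r] {Q : Set (L × L)} (hQ : IsFrameCongruence Q)
    (hpiece : ∀ i, piece r d i ⊆ Q) (i : ι) : ((⊥ : L), d i) ∈ Q := by
  induction i using IsWellFounded.induction r with
  | _ i ih =>
  have hpred : ((⊥ : L), predSup r d i) ∈ Q := by
    simpa [predSup, iSup_subtype'] using hQ.iSup (f := fun j : {j // r j i} => ((⊥ : L), d j))
      fun j => ih j j.2
  have hmeet : ((⊥ : L), predSup r d i ⊓ d i) ∈ Q := by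
    simpa using hQ.inf hpred (hQ.refl (d i))
  refine hQ.trans hmeet (hpiece i ⟨?_, ?_⟩)
  · show predSup r d i ⊓ d i ⊓ predSup r d i = d i ⊓ predSup r d i
    rw [inf_right_comm, inf_idem, inf_comm]
  · show predSup r d i ⊓ d i ⊔ d i = d i ⊔ d i
    rw [sup_eq_right.2 inf_le_right, sup_idem]

theorem frameCongGen_iUnion_piece [IsWellFounded ι r] (hd : ⨆ i, d i = ⊤) :
    frameCongGen (⋃ i, piece r d i) = univ := by
  have hQ := isFrameCongruence_frameCongGen (⋃ i, piece r d i)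
  refine hQ.eq_univ_of_bot_top ?_
  simpa [hd] using hQ.iSup (f := fun i => ((⊥ : L), d i)) (bot_mem_of_piece_subset hQ
    (fun i => (subset_iUnion _ i).trans (subset_frameCongGen _)))

end Pieces

section Rank

open OrdinalApprox

variable {L : Type u} [Order.Frame L] (R : Set (L × L))

def reachStep : L →o L where
  toFun x := sSup (Prod.snd '' {p ∈ R | p.1 ≤ x})
  monotone' _ _ h := sSup_le_sSup (image_mono fun _ hp => ⟨hp.1, hp.2.trans h⟩)

noncomputable def reachRank (x : L) : Ordinal.{u} :=
  sInf {o | x ≤ lfpApprox (reachStep R) ⊥ o}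

variable {R}

theorem exists_isWellOrder_le_predSup (hR : ∀ x, (∀ p ∈ R, p.1 ≤ x → p.2 ≤ x) → x = ⊤) :
    ∃ r : R → R → Prop, IsWellOrder R r ∧ ∀ t : R, t.1.1 ≤ predSup r (fun u => u.1.2) t := by
  have hlfp : (reachStep R).lfp = ⊤ :=
    hR _ fun p hp h => calc
      p.2 ≤ reachStep R (reachStep R).lfp := le_sSup ⟨p, ⟨hp, h⟩, rfl⟩
      _ = (reachStep R).lfp := OrderHom.map_lfp _
  have le_rank (x : L) : x ≤ lfpApprox (reachStep R) ⊥ (reachRank R x) :=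
    csInf_mem (s := {o | x ≤ lfpApprox (reachStep R) ⊥ o})
      ⟨Cardinal.ord (Order.succ (Cardinal.mk L)), by
        rw [mem_ofPred_eq, lfpApprox_ord_eq_lfp, hlfp]; exact le_top⟩
  have rank_le {x : L} {o : Ordinal.{u}} (h : x ≤ lfpApprox (reachStep R) ⊥ o) :
      reachRank R x ≤ o :=
    csInf_le' h
  let key : R ↪ Ordinal.{u} × R :=
    ⟨fun t => (reachRank R t.1.1, t), fun _ _ h => (Prod.ext_iff.1 h).2⟩
  refine ⟨key ⁻¹'o Prod.Lex (· < ·) WellOrderingRel, (RelEmbedding.preimage key _).isWellOrder,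
    fun t => (le_rank t.1.1).trans ?_⟩
  rw [lfpApprox]
  refine sup_le bot_le (iSup₂_le fun o ho => sSup_le ?_)
  rintro _ ⟨q, ⟨hq, hqo⟩, rfl⟩
  exact le_iSup₂ (f := fun (u : R) (_ : (key ⁻¹'o Prod.Lex (· < ·) WellOrderingRel) u t) => u.1.2)
    ⟨q, hq⟩ (Prod.Lex.left _ _ ((rank_le hqo).trans_lt ho))

end Rank

theorem eq_top_of_frameCongGen_sUnion_eq_univ {L : Type u} [Order.Frame L]
    {S : Set (Set (L × L))} (hS : ∀ s ∈ S, IsFrameCongruence s)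
    (hcov : frameCongGen (⋃₀ S) = univ) {x : L} (hx : ∀ p ∈ ⋃₀ S, p.1 ≤ x → p.2 ≤ x) :
    x = ⊤ := by
  refine eq_top_of_frameCongGen_eq_univ hcov fun p ⟨s, hs, hp⟩ u => ⟨fun h => ?_, fun h => ?_⟩
  · exact hx _ ⟨s, hs, (hS s hs).inf hp ((hS s hs).refl u)⟩ h
  · exact hx _ ⟨s, hs, (hS s hs).inf ((hS s hs).symm hp) ((hS s hs).refl u)⟩ h

/-- The congruence frame of a frame is ultraparacompact: every cover of the
frame of frame congruences is refined by a partition. -/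
theorem congruence_frame_ultraparacompact {L : Type u} [Order.Frame L]
    (S : Set (Set (L × L))) (hS : ∀ s ∈ S, IsFrameCongruence s)
    (hcov : frameCongGen (⋃₀ S) = Set.univ) :
    ∃ P : Set (Set (L × L)),
      (∀ p ∈ P, IsFrameCongruence p) ∧
      (∀ p ∈ P, ∀ q ∈ P, p ≠ q → p ∩ q = Set.diagonal L) ∧
      frameCongGen (⋃₀ P) = Set.univ ∧
      ∀ p ∈ P, ∃ s ∈ S, p ⊆ s := by
  obtain ⟨r, hr, hle⟩ := exists_isWellOrder_le_predSup fun _ =>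
    eq_top_of_frameCongGen_sUnion_eq_univ hS hcov
  refine ⟨range (piece r fun t : ⋃₀ S => t.1.2), ?_, ?_, ?_, ?_⟩
  · rintro _ ⟨t, rfl⟩
    exact isFrameCongruence_piece t
  · rintro _ ⟨t, rfl⟩ _ ⟨u, rfl⟩ hne
    exact piece_inter_piece (ne_of_apply_ne _ hne)
  · rw [sUnion_range]
    exact frameCongGen_iUnion_piece (eq_top_of_frameCongGen_sUnion_eq_univ hS hcov
      fun p hp _ => le_iSup (fun t : ⋃₀ S => t.1.2) ⟨p, hp⟩)
  · rintro _ ⟨t, rfl⟩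
    obtain ⟨s, hs, hts⟩ := t.2
    exact ⟨s, hs, (inter_subset_inter_left _ (openCong_anti (hle t))).trans
      (openCong_inter_closedCong_subset (hS s hs) hts)⟩
end

section
/- Let L be a complete lattice and A ⊆ L a subset that is well-ordered by the order of L, i.e. every nonempty subset of A has a least element. Then the closure of A under suprema, namely {sSup B : B ⊆ A}, is also well-ordered by the order of L. -/
/-- In a complete lattice, the closure under suprema of a well-ordered subset
is again well-ordered (every nonempty subset has a least element). -/
theorem supClosure_of_wellOrdered_isWellOrdered {L : Type*} [CompleteLattice L]
    (A : Set L) (hA : ∀ B ⊆ A, B.Nonempty → ∃ b, IsLeast B b) :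
    ∀ B ⊆ {x : L | ∃ C ⊆ A, x = sSup C}, B.Nonempty → ∃ b, IsLeast B b := by
  intro B hB hBne
  obtain ⟨x0, hx0⟩ := hBne
  set D : Set L := {a | a ∈ A ∧ ∀ x ∈ B, a ≤ x} with hD
  set m := sSup D with hm
  have hmle : ∀ x ∈ B, m ≤ x := fun x hx => sSup_le (fun a ha => ha.2 x hx)
  by_cases h : ∃ x ∈ B, x ≤ m
  · obtain ⟨x, hx, hxm⟩ := h
    exact ⟨x, hx, fun y hy => hxm.trans (hmle y hy)⟩
  · exfalso
    push_neg at h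
    have hC : ∀ x, x ∈ B → ∃ C ⊆ A, x = sSup C := fun x hx => hB hx
    choose C hCA hCsup using hC
    set E := {a : L | a ∈ A ∧ ∃ x, ∃ hx : x ∈ B, a ∈ C x hx ∧ ¬ a ≤ m} with hE
    have hEA : E ⊆ A := fun a ha => ha.1
    have hEne : E.Nonempty := by
      obtain ⟨a, haC, ham⟩ : ∃ a ∈ C x0 hx0, ¬ a ≤ m := by
        by_contra hc
        push_neg at hc
        exact h x0 hx0 ((hCsup x0 hx0) ▸ sSup_le hc)
      exact ⟨a, hCA x0 hx0 haC, x0, hx0, haC, ham⟩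
    obtain ⟨a0, ha0E, ha0least⟩ := hA E hEA hEne
    have hall : ∀ y ∈ B, a0 ≤ y := by
      intro y hy
      by_cases hc : ∃ a ∈ C y hy, ¬ a ≤ m
      · obtain ⟨a, haC, ham⟩ := hc
        exact (ha0least ⟨hCA y hy haC, y, hy, haC, ham⟩).trans
          ((hCsup y hy) ▸ le_sSup haC)
      · push_neg at hc
        exact absurd ((hCsup y hy) ▸ sSup_le hc) (h y hy)
    exact ha0E.2.choose_spec.choose_spec.2 (le_sSup ⟨ha0E.1, hall⟩)
end

section
/- Let L be a frame and a, b ∈ L. Then the lattice congruence generated by the single pair (a,b) equals the lattice congruence generated by the pair (a ⊓ b, a ⊔ b), equals ∇_{a ⊔ b} ∩ Δ_{a ⊓ b}, and is moreover a frame congruence on L. -/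
universe u

/-- The closed congruence `∇_a`. -/
def nabla {L : Type u} [Order.Frame L] (a : L) : Set (L × L) :=
  {p | p.1 ⊔ a = p.2 ⊔ a}

/-- The open congruence `Δ_a`. -/
def delta {L : Type u} [Order.Frame L] (a : L) : Set (L × L) :=
  {p | p.1 ⊓ a = p.2 ⊓ a}

section Aux

variable {L : Type u} [Order.Frame L]

lemma mem_nd_iff {j m : L} {p : L × L} :
    p ∈ nabla j ∩ delta m ↔ p.1 ⊔ j = p.2 ⊔ j ∧ p.1 ⊓ m = p.2 ⊓ m := Iff.rfl

lemma nd_frameCong (j m : L) : IsFrameCongruence (nabla j ∩ delta m) := by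
  refine ⟨⟨fun x => ⟨rfl, rfl⟩, fun h => ⟨h.1.symm, h.2.symm⟩,
    fun h h' => ⟨h.1.trans h'.1, h.2.trans h'.2⟩⟩, ?_, ?_⟩
  · rintro p q ⟨hp1, hp2⟩ ⟨hq1, hq2⟩
    constructor
    · show (p.1 ⊓ q.1) ⊔ j = (p.2 ⊓ q.2) ⊔ j
      rw [sup_inf_right, sup_inf_right, hp1, hq1]
    · show (p.1 ⊓ q.1) ⊓ m = (p.2 ⊓ q.2) ⊓ m
      rw [inf_inf_distrib_right, hp2, hq2, ← inf_inf_distrib_right]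
  · intro S hS
    constructor
    · show sSup (Prod.fst '' S) ⊔ j = sSup (Prod.snd '' S) ⊔ j
      apply le_antisymm
      · refine sup_le (sSup_le ?_) le_sup_right
        rintro x ⟨p, hp, rfl⟩
        calc p.1 ≤ p.1 ⊔ j := le_sup_left
        _ = p.2 ⊔ j := (hS hp).1
        _ ≤ sSup (Prod.snd '' S) ⊔ j :=
            sup_le_sup_right (le_sSup (Set.mem_image_of_mem Prod.snd hp)) j
      · refine sup_le (sSup_le ?_) le_sup_right
        rintro x ⟨p, hp, rfl⟩
        calc p.2 ≤ p.2 ⊔ j := le_sup_left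
        _ = p.1 ⊔ j := ((hS hp).1).symm
        _ ≤ sSup (Prod.fst '' S) ⊔ j :=
            sup_le_sup_right (le_sSup (Set.mem_image_of_mem Prod.fst hp)) j
    · show sSup (Prod.fst '' S) ⊓ m = sSup (Prod.snd '' S) ⊓ m
      rw [sSup_inf_eq, sSup_inf_eq]
      apply le_antisymm
      · refine iSup₂_le ?_
        rintro x ⟨p, hp, rfl⟩
        rw [(hS hp).2]
        exact le_iSup₂_of_le p.2 (Set.mem_image_of_mem Prod.snd hp) le_rfl
      · refine iSup₂_le ?_
        rintro x ⟨p, hp, rfl⟩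
        rw [← (hS hp).2]
        exact le_iSup₂_of_le p.1 (Set.mem_image_of_mem Prod.fst hp) le_rfl

lemma nd_latticeCong (j m : L) : IsLatticeCongruence (nabla j ∩ delta m) := by
  obtain ⟨he, hm, -⟩ := nd_frameCong j m
  refine ⟨he, fun p q hp hq => ⟨hm p q hp hq, ?_, ?_⟩⟩
  · show (p.1 ⊔ q.1) ⊔ j = (p.2 ⊔ q.2) ⊔ j
    rw [sup_sup_distrib_right, hp.1, hq.1, ← sup_sup_distrib_right]
  · show (p.1 ⊔ q.1) ⊓ m = (p.2 ⊔ q.2) ⊓ m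
    rw [inf_sup_right, hp.2, hq.2, ← inf_sup_right]

lemma nd_subset {C : Set (L × L)} (hC : IsLatticeCongruence C) {m j : L}
    (hmj : (m, j) ∈ C) : nabla j ∩ delta m ⊆ C := by
  obtain ⟨he, hop⟩ := hC
  have key : ∀ x y : L, x ≤ y → x ⊔ j = y ⊔ j → x ⊓ m = y ⊓ m → (x, y) ∈ C := by
    intro x y hxy h1 h2
    have hc : (x ⊔ (y ⊓ m), x ⊔ (y ⊓ j)) ∈ C :=
      (hop (x, x) (y ⊓ m, y ⊓ j) (he.refl x) ((hop (y, y) (m, j) (he.refl y) hmj).1)).2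
    have e1 : x ⊔ (y ⊓ m) = x := by rw [← h2, sup_inf_self]
    have e2 : x ⊔ (y ⊓ j) = y := by
      rw [sup_inf_left, sup_eq_right.2 hxy, h1, inf_sup_self]
    rwa [e1, e2] at hc
  rintro ⟨x, y⟩ ⟨h1, h2⟩
  simp only [nabla, delta, Set.mem_setOf_eq] at h1 h2
  have hw1 : (x ⊓ y) ⊔ j = x ⊔ j := by
    apply le_antisymm (sup_le_sup_right inf_le_left j)
    refine sup_le ?_ le_sup_right
    calc x = x ⊓ (x ⊔ j) := (inf_sup_self).symm
    _ = x ⊓ (y ⊔ j) := by rw [h1]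
    _ = (x ⊓ y) ⊔ (x ⊓ j) := inf_sup_left x y j
    _ ≤ (x ⊓ y) ⊔ j := sup_le_sup_left inf_le_right _
  have hw1' : (x ⊓ y) ⊔ j = y ⊔ j := by
    apply le_antisymm (sup_le_sup_right inf_le_right j)
    refine sup_le ?_ le_sup_right
    calc y = y ⊓ (y ⊔ j) := (inf_sup_self).symm
    _ = y ⊓ (x ⊔ j) := by rw [h1]
    _ = (y ⊓ x) ⊔ (y ⊓ j) := inf_sup_left y x j
    _ ≤ (x ⊓ y) ⊔ j := sup_le_sup (inf_comm y x).le inf_le_right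
  have hw2 : (x ⊓ y) ⊓ m = x ⊓ m := by
    rw [inf_assoc, ← h2, ← inf_assoc, inf_idem]
  have hw2' : (x ⊓ y) ⊓ m = y ⊓ m := by
    rw [inf_assoc, ← inf_assoc, inf_comm x y, inf_assoc, h2, ← inf_assoc, inf_idem]
  exact he.trans (he.symm (key (x ⊓ y) x inf_le_left hw1 hw2))
    (key (x ⊓ y) y inf_le_right hw1' hw2')

end Aux

/-- The principal lattice congruence generated by `(a, b)` equals the one
generated by `(a ⊓ b, a ⊔ b)`, equals `∇_{a ⊔ b} ∩ Δ_{a ⊓ b}`, and is a frame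
congruence. -/
theorem principal_congruence {L : Type u} [Order.Frame L] (a b : L) :
    latticeCongGen {(a, b)} = latticeCongGen {(a ⊓ b, a ⊔ b)} ∧
    latticeCongGen {(a, b)} = nabla (a ⊔ b) ∩ delta (a ⊓ b) ∧
    IsFrameCongruence (latticeCongGen {(a, b)}) := by
  set j := a ⊔ b
  set m := a ⊓ b
  set T := nabla j ∩ delta m with hT
  have habT : (a, b) ∈ T := by
    refine ⟨?_, ?_⟩
    · show a ⊔ j = b ⊔ j
      rw [sup_eq_right.2 (le_sup_left : a ≤ j), sup_eq_right.2 (le_sup_right : b ≤ j)]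
    · show a ⊓ m = b ⊓ m
      rw [inf_eq_right.2 (inf_le_left : m ≤ a), inf_eq_right.2 (inf_le_right : m ≤ b)]
  have hmjT : (m, j) ∈ T := by
    refine ⟨?_, ?_⟩
    · show m ⊔ j = j ⊔ j
      rw [sup_eq_right.2 (inf_le_sup : m ≤ j), sup_idem]
    · show m ⊓ m = j ⊓ m
      rw [inf_eq_right.2 (inf_le_sup : m ≤ j), inf_idem]
  have hmj_of : ∀ C : Set (L × L), IsLatticeCongruence C → (a, b) ∈ C → (m, j) ∈ C := by
    intro C hC hab
    have h1 : (a ⊓ b, b) ∈ C := by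
      have := (hC.2 (a, b) (b, b) hab (hC.1.refl b)).1
      simpa using this
    have h2 : (a, a ⊔ b) ∈ C := by
      have := (hC.2 (a, a) (a, b) (hC.1.refl a) hab).2
      simpa using this
    exact hC.1.trans (hC.1.trans h1 (hC.1.symm hab)) h2
  have e1 : latticeCongGen {(a, b)} = T := by
    apply le_antisymm
    · exact Set.sInter_subset_of_mem ⟨nd_latticeCong j m, Set.singleton_subset_iff.2 habT⟩
    · refine Set.subset_sInter ?_
      rintro C ⟨hC, hab⟩
      exact nd_subset hC (hmj_of C hC (hab rfl))
  have e2 : latticeCongGen {(m, j)} = T := by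
    apply le_antisymm
    · exact Set.sInter_subset_of_mem ⟨nd_latticeCong j m, Set.singleton_subset_iff.2 hmjT⟩
    · refine Set.subset_sInter ?_
      rintro C ⟨hC, hmj⟩
      exact nd_subset hC (hmj rfl)
  exact ⟨e1.trans e2.symm, e1, e1 ▸ nd_frameCong j m⟩
end

section
/- Let L be a frame. For an ideal I of L (a nonempty, downward-closed, join-closed subset), define ∇_I = {(x,y) ∈ L × L : ∃ a ∈ I, x ⊔ a = y ⊔ a}. Then: (i) ∇_I is a lattice congruence on L; (ii) for ideals I, J of L, I ⊆ J if and only if ∇_I ⊆ ∇_J (so I ↦ ∇_I is an order embedding); and (iii) for every subset A ⊆ L, the lattice congruence generated by ⋃_{a ∈ A} ∇_a equals ∇_I, where I is the smallest ideal of L containing A ∪ {⊥}. (Hence the joins of closed congruences in the frame of lattice congruences form a frame isomorphic to the frame of ideals of L.) -/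
universe u

/-- An ideal of `L`: a nonempty lower set closed under binary joins. -/
def IsIdeal {L : Type u} [Order.Frame L] (I : Set L) : Prop :=
  I.Nonempty ∧ IsLowerSet I ∧ ∀ a ∈ I, ∀ b ∈ I, a ⊔ b ∈ I

/-- The congruence `∇_I` associated to an ideal `I`. -/
def nablaIdeal {L : Type u} [Order.Frame L] (I : Set L) : Set (L × L) :=
  {p | ∃ a ∈ I, p.1 ⊔ a = p.2 ⊔ a}

/-! `∇_I` is the directed union of the closed congruences `∇_a`, `a ∈ I`, so it is a congruence,
and its `⊥`-class is `I`, which makes `I ↦ ∇_I` an order embedding. Conversely the `⊥`-class of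
any congruence `C` is an ideal `K` with `∇_K ⊆ C`: from `a ≡ ⊥` one gets `x ≡ x ⊔ a`. Hence a
congruence containing every `∇_a`, `a ∈ A`, contains `∇_I` for the ideal generated by `A`. -/

section

variable {L : Type u} [Order.Frame L]

namespace IsLatticeCongruence

variable {C : Set (L × L)}

theorem refl_mem (hC : IsLatticeCongruence C) (x : L) : (x, x) ∈ C :=
  hC.1.refl x

theorem inf_mem (hC : IsLatticeCongruence C) {x y u v : L} (hxy : (x, y) ∈ C)
    (huv : (u, v) ∈ C) : (x ⊓ u, y ⊓ v) ∈ C :=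
  (hC.2 _ _ hxy huv).1

theorem sup_mem (hC : IsLatticeCongruence C) {x y u v : L} (hxy : (x, y) ∈ C)
    (huv : (u, v) ∈ C) : (x ⊔ u, y ⊔ v) ∈ C :=
  (hC.2 _ _ hxy huv).2

end IsLatticeCongruence

theorem isLatticeCongruence_iUnion {ι : Type*} [Nonempty ι] {C : ι → Set (L × L)}
    (hdir : Directed (· ⊆ ·) C) (hC : ∀ i, IsLatticeCongruence (C i)) :
    IsLatticeCongruence (⋃ i, C i) := by
  have common : ∀ p ∈ ⋃ i, C i, ∀ q ∈ ⋃ i, C i, ∃ k, p ∈ C k ∧ q ∈ C k := by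
    intro p hp q hq
    obtain ⟨i, hi⟩ := Set.mem_iUnion.1 hp
    obtain ⟨j, hj⟩ := Set.mem_iUnion.1 hq
    obtain ⟨k, hik, hjk⟩ := hdir i j
    exact ⟨k, hik hi, hjk hj⟩
  refine ⟨⟨fun x => ?_, fun hxy => ?_, fun hxy hyz => ?_⟩, fun p q hp hq => ?_⟩
  · obtain ⟨i⟩ := ‹Nonempty ι›
    exact Set.mem_iUnion.2 ⟨i, (hC i).refl_mem x⟩
  · obtain ⟨i, hi⟩ := Set.mem_iUnion.1 hxy
    exact Set.mem_iUnion.2 ⟨i, (hC i).1.symm hi⟩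
  · obtain ⟨k, hxy, hyz⟩ := common _ hxy _ hyz
    exact Set.mem_iUnion.2 ⟨k, (hC k).1.trans hxy hyz⟩
  · obtain ⟨k, hp, hq⟩ := common p hp q hq
    exact ⟨Set.mem_iUnion.2 ⟨k, (hC k).inf_mem hp hq⟩, Set.mem_iUnion.2 ⟨k, (hC k).sup_mem hp hq⟩⟩

theorem isLatticeCongruence_nabla (a : L) : IsLatticeCongruence (nabla a) := by
  refine ⟨⟨fun _ => rfl, Eq.symm, Eq.trans⟩, fun p q (hp : _ = _) (hq : _ = _) => ⟨?_, ?_⟩⟩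
  · change p.1 ⊓ q.1 ⊔ a = p.2 ⊓ q.2 ⊔ a
    rw [sup_inf_right, sup_inf_right, hp, hq]
  · change p.1 ⊔ q.1 ⊔ a = p.2 ⊔ q.2 ⊔ a
    rw [sup_sup_distrib_right p.1, sup_sup_distrib_right p.2, hp, hq]

theorem nabla_mono {a b : L} (hab : a ≤ b) : nabla a ⊆ nabla b := fun p (hp : _ = _) =>
  calc p.1 ⊔ b = p.1 ⊔ a ⊔ b := by rw [sup_assoc, sup_eq_right.2 hab]
    _ = p.2 ⊔ b := by rw [hp, sup_assoc, sup_eq_right.2 hab]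

theorem mk_bot_mem_nabla_self (a : L) : (a, ⊥) ∈ nabla a := by
  simp [nabla]

theorem nablaIdeal_eq_iUnion (I : Set L) : nablaIdeal I = ⋃ a : I, nabla (a : L) := by
  ext p
  simp [nablaIdeal, nabla]

theorem nabla_subset_nablaIdeal {I : Set L} {a : L} (ha : a ∈ I) : nabla a ⊆ nablaIdeal I :=
  fun _ hp => ⟨a, ha, hp⟩

theorem nablaIdeal_mono {I J : Set L} (hIJ : I ⊆ J) : nablaIdeal I ⊆ nablaIdeal J :=
  fun _ ⟨a, ha, hp⟩ => ⟨a, hIJ ha, hp⟩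

theorem IsIdeal.isLatticeCongruence_nablaIdeal {I : Set L} (hI : IsIdeal I) :
    IsLatticeCongruence (nablaIdeal I) := by
  have := hI.1.to_subtype
  rw [nablaIdeal_eq_iUnion]
  exact isLatticeCongruence_iUnion
    (fun a b => ⟨⟨(a : L) ⊔ b, hI.2.2 _ a.2 _ b.2⟩,
      nabla_mono le_sup_left, nabla_mono le_sup_right⟩)
    (fun a => isLatticeCongruence_nabla (a : L))

theorem IsLowerSet.mk_bot_mem_nablaIdeal_iff {J : Set L} (hJ : IsLowerSet J) {a : L} :
    (a, ⊥) ∈ nablaIdeal J ↔ a ∈ J := by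
  refine ⟨fun ⟨b, hb, hab⟩ => hJ ?_ hb,
    fun ha => nabla_subset_nablaIdeal ha (mk_bot_mem_nabla_self a)⟩
  rw [bot_sup_eq] at hab
  exact sup_eq_right.1 hab

theorem IsLowerSet.nablaIdeal_subset_nablaIdeal_iff {I J : Set L} (hJ : IsLowerSet J) :
    nablaIdeal I ⊆ nablaIdeal J ↔ I ⊆ J :=
  ⟨fun h a ha => hJ.mk_bot_mem_nablaIdeal_iff.1 <|
      h (nabla_subset_nablaIdeal ha (mk_bot_mem_nabla_self a)),
    nablaIdeal_mono⟩

theorem isIdeal_sInter {𝒥 : Set (Set L)} (h𝒥 : ∀ J ∈ 𝒥, IsIdeal J ∧ ⊥ ∈ J) :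
    IsIdeal (⋂₀ 𝒥) :=
  ⟨⟨⊥, fun J hJ => (h𝒥 J hJ).2⟩, fun _ _ hba ha J hJ => (h𝒥 J hJ).1.2.1 hba (ha J hJ),
    fun _ ha _ hb J hJ => (h𝒥 J hJ).1.2.2 _ (ha J hJ) _ (hb J hJ)⟩

def botClass (C : Set (L × L)) : Set L :=
  {a | (a, ⊥) ∈ C}

namespace IsLatticeCongruence

variable {C : Set (L × L)}

theorem isIdeal_botClass (hC : IsLatticeCongruence C) : IsIdeal (botClass C) := by
  refine ⟨⟨⊥, hC.refl_mem ⊥⟩, fun u v hvu (hu : (u, ⊥) ∈ C) => ?_,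
    fun u (hu : (u, ⊥) ∈ C) v (hv : (v, ⊥) ∈ C) => ?_⟩
  · simpa [botClass, inf_eq_left.2 hvu] using hC.inf_mem (hC.refl_mem v) hu
  · simpa [botClass] using hC.sup_mem hu hv

theorem nablaIdeal_botClass_subset (hC : IsLatticeCongruence C) :
    nablaIdeal (botClass C) ⊆ C := by
  rintro ⟨x, y⟩ ⟨a, ha : (a, ⊥) ∈ C, hxy⟩
  have hx : (x ⊔ a, x) ∈ C := by simpa using hC.sup_mem (hC.refl_mem x) ha
  have hy : (y ⊔ a, y) ∈ C := by simpa using hC.sup_mem (hC.refl_mem y) ha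
  exact hC.1.trans (hC.1.symm hx) (hxy ▸ hy)

end IsLatticeCongruence

theorem latticeCongGen_iUnion_nabla (A : Set L) :
    latticeCongGen (⋃ a ∈ A, nabla a) = nablaIdeal (⋂₀ {J | IsIdeal J ∧ A ∪ {⊥} ⊆ J}) := by
  set I := ⋂₀ {J | IsIdeal J ∧ A ∪ {⊥} ⊆ J}
  have hI : IsIdeal I := isIdeal_sInter fun J hJ => ⟨hJ.1, hJ.2 (Or.inr rfl)⟩
  have hAI : A ⊆ I := fun a ha => Set.mem_sInter.2 fun J hJ => hJ.2 (Or.inl ha)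
  refine subset_antisymm (Set.sInter_subset_of_mem ⟨hI.isLatticeCongruence_nablaIdeal,
    Set.iUnion₂_subset fun a ha => nabla_subset_nablaIdeal (hAI ha)⟩) ?_
  rintro p hp C ⟨hC, hAC⟩
  have hAK : A ∪ {⊥} ⊆ botClass C := by
    rintro a (ha | rfl)
    · exact hAC (Set.mem_biUnion ha (mk_bot_mem_nabla_self a))
    · exact hC.refl_mem ⊥
  have hIK : I ⊆ botClass C := Set.sInter_subset_of_mem ⟨hC.isIdeal_botClass, hAK⟩
  exact hC.nablaIdeal_botClass_subset (nablaIdeal_mono hIK hp)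

end

/-- For ideals `I` of a frame `L`: `∇_I` is a lattice congruence, `I ↦ ∇_I` is
an order embedding, and the lattice congruence generated by a union of closed
congruences `∇_a`, `a ∈ A`, is `∇_I` for the smallest ideal `I ⊇ A ∪ {⊥}`. -/
theorem nablaIdeal_properties {L : Type u} [Order.Frame L] :
    (∀ I : Set L, IsIdeal I → IsLatticeCongruence (nablaIdeal I)) ∧
    (∀ I J : Set L, IsIdeal I → IsIdeal J → (I ⊆ J ↔ nablaIdeal I ⊆ nablaIdeal J)) ∧
    (∀ A : Set L, latticeCongGen (⋃ a ∈ A, nabla a) =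
      nablaIdeal (⋂₀ {J | IsIdeal J ∧ A ∪ {⊥} ⊆ J})) :=
  ⟨fun _ hI => hI.isLatticeCongruence_nablaIdeal,
    fun _ _ _ hJ => hJ.2.1.nablaIdeal_subset_nablaIdeal_iff.symm,
    latticeCongGen_iUnion_nabla⟩
end

section
/- Let L be a frame. Then every lattice congruence C on L is a join of complemented lattice congruences: C equals the lattice congruence generated by the union of a family of lattice congruences D each of which is complemented, meaning there exists a lattice congruence D' with D ∩ D' equal to the diagonal {(x,x) : x ∈ L} and with the lattice congruence generated by D ∪ D' equal to all of L × L. (That is, the frame of lattice congruences on L is zero-dimensional.) -/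
universe u

namespace ZeroDimAux

variable {L : Type u} [Order.Frame L]

/-- The principal congruence associated to a pair `a ≤ b`. -/
def theta (a b : L) : Set (L × L) :=
  {p | p.1 ⊓ a = p.2 ⊓ a ∧ p.1 ⊔ b = p.2 ⊔ b}

/-- The complementary congruence, induced by the nucleus `x ↦ b ⇨ (x ⊔ a)`. -/
def thetaC (a b : L) : Set (L × L) :=
  {p | b ⇨ (p.1 ⊔ a) = b ⇨ (p.2 ⊔ a)}

theorem theta_isCong (a b : L) : IsLatticeCongruence (theta a b) := by
  constructor
  · exact ⟨fun x => ⟨rfl, rfl⟩,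
      fun h => ⟨h.1.symm, h.2.symm⟩,
      fun h h' => ⟨h.1.trans h'.1, h.2.trans h'.2⟩⟩
  · rintro p q ⟨hp1, hp2⟩ ⟨hq1, hq2⟩
    refine ⟨⟨?_, ?_⟩, ?_, ?_⟩
    · calc p.1 ⊓ q.1 ⊓ a = (p.1 ⊓ a) ⊓ (q.1 ⊓ a) := by ac_rfl
        _ = (p.2 ⊓ a) ⊓ (q.2 ⊓ a) := by rw [hp1, hq1]
        _ = p.2 ⊓ q.2 ⊓ a := by ac_rfl
    · calc p.1 ⊓ q.1 ⊔ b = (p.1 ⊔ b) ⊓ (q.1 ⊔ b) := sup_inf_right _ _ _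
        _ = (p.2 ⊔ b) ⊓ (q.2 ⊔ b) := by rw [hp2, hq2]
        _ = p.2 ⊓ q.2 ⊔ b := (sup_inf_right _ _ _).symm
    · calc (p.1 ⊔ q.1) ⊓ a = (p.1 ⊓ a) ⊔ (q.1 ⊓ a) := inf_sup_right _ _ _
        _ = (p.2 ⊓ a) ⊔ (q.2 ⊓ a) := by rw [hp1, hq1]
        _ = (p.2 ⊔ q.2) ⊓ a := (inf_sup_right _ _ _).symm
    · calc p.1 ⊔ q.1 ⊔ b = (p.1 ⊔ b) ⊔ (q.1 ⊔ b) := by ac_rfl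
        _ = (p.2 ⊔ b) ⊔ (q.2 ⊔ b) := by rw [hp2, hq2]
        _ = p.2 ⊔ q.2 ⊔ b := by ac_rfl

/-- The nucleus trick: `J (x ⊔ u) = J (J x ⊔ J u)` for `J x = b ⇨ (x ⊔ a)`. -/
theorem J_sup (a b x u : L) :
    b ⇨ (x ⊔ u ⊔ a) = b ⇨ ((b ⇨ (x ⊔ a)) ⊔ (b ⇨ (u ⊔ a)) ⊔ a) := by
  apply le_antisymm
  · apply himp_le_himp_left
    have hx : x ≤ b ⇨ (x ⊔ a) := le_himp_iff.2 (inf_le_left.trans le_sup_left)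
    have hu : u ≤ b ⇨ (u ⊔ a) := le_himp_iff.2 (inf_le_left.trans le_sup_left)
    exact sup_le_sup (sup_le_sup hx hu) le_rfl
  · rw [le_himp_iff]
    calc (b ⇨ ((b ⇨ (x ⊔ a)) ⊔ (b ⇨ (u ⊔ a)) ⊔ a)) ⊓ b
        = ((b ⇨ (x ⊔ a)) ⊔ (b ⇨ (u ⊔ a)) ⊔ a) ⊓ b := by
          rw [inf_comm, inf_himp, inf_comm]
      _ = ((b ⇨ (x ⊔ a)) ⊓ b) ⊔ ((b ⇨ (u ⊔ a)) ⊓ b) ⊔ (a ⊓ b) := by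
          rw [inf_sup_right, inf_sup_right]
      _ ≤ (x ⊔ a) ⊔ (u ⊔ a) ⊔ a :=
          sup_le_sup (sup_le_sup himp_inf_le himp_inf_le) inf_le_left
      _ ≤ x ⊔ u ⊔ a :=
          sup_le (sup_le (sup_le (le_sup_left.trans le_sup_left) le_sup_right)
            (sup_le (le_sup_right.trans le_sup_left) le_sup_right)) le_sup_right

theorem thetaC_isCong (a b : L) : IsLatticeCongruence (thetaC a b) := by
  constructor
  · exact ⟨fun x => rfl, fun h => h.symm, fun h h' => h.trans h'⟩
  · rintro p q hp hq
    constructor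
    · show b ⇨ (p.1 ⊓ q.1 ⊔ a) = b ⇨ (p.2 ⊓ q.2 ⊔ a)
      rw [sup_inf_right, sup_inf_right, himp_inf_distrib, himp_inf_distrib, hp, hq]
    · show b ⇨ (p.1 ⊔ q.1 ⊔ a) = b ⇨ (p.2 ⊔ q.2 ⊔ a)
      rw [J_sup a b p.1 q.1, J_sup a b p.2 q.2, hp, hq]

theorem theta_inter_thetaC (a b : L) (hab : a ≤ b) :
    theta a b ∩ thetaC a b = Set.diagonal L := by
  ext p
  constructor
  · rintro ⟨⟨h1, h2⟩, h3⟩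
    -- from h3 : b ⇨ (p.1 ⊔ a) = b ⇨ (p.2 ⊔ a)
    have hb : b ⊓ (p.1 ⊔ a) = b ⊓ (p.2 ⊔ a) := by
      rw [← inf_himp b (p.1 ⊔ a), ← inf_himp b (p.2 ⊔ a), h3]
    have hba : b ⊓ a = a := inf_eq_right.2 hab
    have hsup : (b ⊓ p.1) ⊔ a = (b ⊓ p.2) ⊔ a := by
      rw [← hba]
      calc (b ⊓ p.1) ⊔ (b ⊓ a) = b ⊓ (p.1 ⊔ a) := (inf_sup_left _ _ _).symm
        _ = b ⊓ (p.2 ⊔ a) := hb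
        _ = (b ⊓ p.2) ⊔ (b ⊓ a) := inf_sup_left _ _ _
    have hinf : (b ⊓ p.1) ⊓ a = (b ⊓ p.2) ⊓ a := by
      calc (b ⊓ p.1) ⊓ a = p.1 ⊓ (b ⊓ a) := by ac_rfl
        _ = p.1 ⊓ a := by rw [hba]
        _ = p.2 ⊓ a := h1
        _ = p.2 ⊓ (b ⊓ a) := by rw [hba]
        _ = (b ⊓ p.2) ⊓ a := by ac_rfl
    have hbp : b ⊓ p.1 = b ⊓ p.2 := eq_of_inf_eq_sup_eq hinf hsup
    have : p.1 ⊓ b = p.2 ⊓ b := by rw [inf_comm p.1 b, inf_comm p.2 b, hbp]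
    exact eq_of_inf_eq_sup_eq this h2
  · rintro rfl'
    have : p.1 = p.2 := rfl'
    exact ⟨⟨by rw [this], by rw [this]⟩, by show b ⇨ (p.1 ⊔ a) = _; rw [this]⟩

theorem gen_union_eq_univ (a b : L) (hab : a ≤ b) :
    latticeCongGen (theta a b ∪ thetaC a b) = Set.univ := by
  apply Set.eq_univ_of_forall
  intro p
  apply Set.mem_sInter.2
  rintro E ⟨hE, hsub⟩
  have hab' : (a, b) ∈ E := hsub (Or.inl ⟨by rw [inf_eq_right.2 hab, inf_idem],
    by rw [sup_eq_right.2 hab, sup_idem]⟩)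
  have hbota : ((⊥ : L), a) ∈ E := hsub (Or.inr (by
    show b ⇨ ((⊥ : L) ⊔ a) = b ⇨ (a ⊔ a); rw [bot_sup_eq, sup_idem]))
  have hbtop : (b, (⊤ : L)) ∈ E := hsub (Or.inr (by
    show b ⇨ (b ⊔ a) = b ⇨ ((⊤ : L) ⊔ a)
    rw [sup_eq_left.2 hab, himp_self, top_sup_eq, himp_top]))
  have hbt : ((⊥ : L), (⊤ : L)) ∈ E := hE.1.trans (hE.1.trans hbota hab') hbtop
  -- now every pair is in E
  have h1 : (p.1, (⊤ : L)) ∈ E := by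
    have := (hE.2 (p.1, p.1) (⊥, ⊤) (hE.1.refl p.1) hbt).2
    simpa using this
  have h2 : (p.2, (⊤ : L)) ∈ E := by
    have := (hE.2 (p.2, p.2) (⊥, ⊤) (hE.1.refl p.2) hbt).2
    simpa using this
  exact hE.1.trans h1 (hE.1.symm h2)

theorem theta_subset {C : Set (L × L)} (hC : IsLatticeCongruence C)
    {a b : L} (_hab : a ≤ b) (hmem : (a, b) ∈ C) : theta a b ⊆ C := by
  -- auxiliary step: the comparable case
  have aux : ∀ x y : L, y ≤ x → x ⊓ a = y ⊓ a → x ⊔ b = y ⊔ b → (x, y) ∈ C := by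
    intro x y hyx h1 h2
    have hx : (x ⊔ a, x ⊔ b) ∈ C := (hC.2 (x, x) (a, b) (hC.1.refl x) hmem).2
    have hy : (y ⊔ a, y ⊔ b) ∈ C := (hC.2 (y, y) (a, b) (hC.1.refl y) hmem).2
    rw [h2.symm] at hy
    have h3 : (x ⊔ a, y ⊔ a) ∈ C := hC.1.trans hx (hC.1.symm hy)
    have h4 : (x ⊓ (x ⊔ a), x ⊓ (y ⊔ a)) ∈ C :=
      (hC.2 (x, x) (x ⊔ a, y ⊔ a) (hC.1.refl x) h3).1
    have e1 : x ⊓ (x ⊔ a) = x := inf_sup_self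
    have e2 : x ⊓ (y ⊔ a) = y := by
      calc x ⊓ (y ⊔ a) = (x ⊓ y) ⊔ (x ⊓ a) := inf_sup_left _ _ _
        _ = y ⊔ (y ⊓ a) := by rw [inf_eq_right.2 hyx, h1]
        _ = y := sup_eq_left.2 inf_le_left
    rwa [e1, e2] at h4
  rintro ⟨x, y⟩ ⟨h1, h2⟩
  simp only [Set.mem_setOf_eq] at h1 h2
  have hz1 : (x ⊓ y) ⊓ a = x ⊓ a := by
    calc (x ⊓ y) ⊓ a = x ⊓ (y ⊓ a) := by ac_rfl
      _ = x ⊓ (x ⊓ a) := by rw [← h1]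
      _ = x ⊓ a := by rw [← inf_assoc, inf_idem]
  have hz1' : (x ⊓ y) ⊓ a = y ⊓ a := by rw [hz1, h1]
  have hz2 : (x ⊓ y) ⊔ b = x ⊔ b := by
    calc (x ⊓ y) ⊔ b = (x ⊔ b) ⊓ (y ⊔ b) := sup_inf_right _ _ _
      _ = (x ⊔ b) ⊓ (x ⊔ b) := by rw [← h2]
      _ = x ⊔ b := inf_idem _
  have hz2' : (x ⊓ y) ⊔ b = y ⊔ b := by rw [hz2, h2]
  have hxz : (x, x ⊓ y) ∈ C := aux x (x ⊓ y) inf_le_left hz1.symm hz2.symm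
  have hyz : (y, x ⊓ y) ∈ C := aux y (x ⊓ y) inf_le_right hz1'.symm hz2'.symm
  exact hC.1.trans hxz (hC.1.symm hyz)

end ZeroDimAux

/-- The frame of lattice congruences on a frame is zero-dimensional: every
lattice congruence is the join of a family of complemented lattice
congruences. -/
theorem latticeCongruenceFrame_zeroDimensional {L : Type u} [Order.Frame L]
    (C : Set (L × L)) (hC : IsLatticeCongruence C) :
    ∃ 𝒟 : Set (Set (L × L)),
      (∀ D ∈ 𝒟, IsLatticeCongruence D ∧
        ∃ D' : Set (L × L), IsLatticeCongruence D' ∧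
          D ∩ D' = Set.diagonal L ∧ latticeCongGen (D ∪ D') = Set.univ) ∧
      C = latticeCongGen (⋃₀ 𝒟) := by
  classical
  refine ⟨{D | ∃ a b : L, a ≤ b ∧ (a, b) ∈ C ∧ D = ZeroDimAux.theta a b}, ?_, ?_⟩
  · rintro D ⟨a, b, hab, hmem, rfl⟩
    exact ⟨ZeroDimAux.theta_isCong a b, ZeroDimAux.thetaC a b,
      ZeroDimAux.thetaC_isCong a b, ZeroDimAux.theta_inter_thetaC a b hab,
      ZeroDimAux.gen_union_eq_univ a b hab⟩
  · apply Set.Subset.antisymm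
    · -- C ⊆ gen
      intro p hp
      apply Set.mem_sInter.2
      rintro E ⟨hE, hsub⟩
      apply hsub
      refine ⟨ZeroDimAux.theta (p.1 ⊓ p.2) (p.1 ⊔ p.2),
        ⟨p.1 ⊓ p.2, p.1 ⊔ p.2, inf_le_sup, ?_, rfl⟩, ?_, ?_⟩
      · -- (p.1 ⊓ p.2, p.1 ⊔ p.2) ∈ C
        have h1 : (p.1 ⊓ p.2, p.2) ∈ C := by
          have := (hC.2 p (p.2, p.2) hp (hC.1.refl p.2)).1
          simpa using this
        have h2 : (p.1 ⊔ p.2, p.2) ∈ C := by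
          have := (hC.2 p (p.2, p.2) hp (hC.1.refl p.2)).2
          simpa using this
        exact hC.1.trans h1 (hC.1.symm h2)
      · show p.1 ⊓ (p.1 ⊓ p.2) = p.2 ⊓ (p.1 ⊓ p.2)
        rw [inf_of_le_right inf_le_left, inf_of_le_right inf_le_right]
      · show p.1 ⊔ (p.1 ⊔ p.2) = p.2 ⊔ (p.1 ⊔ p.2)
        rw [sup_of_le_right le_sup_left, sup_of_le_right le_sup_right]
    · -- gen ⊆ C
      apply Set.sInter_subset_of_mem
      refine ⟨hC, ?_⟩
      rintro p ⟨D, ⟨a, b, hab, hmem, rfl⟩, hp⟩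
      exact ZeroDimAux.theta_subset hC hab hmem hp
end

section
/- Let L be a frame and A ⊆ L a covering downset (a downward-closed subset with sSup A = ⊤). Define D_A = {a ∈ L : there exists a partition P of L such that every b ∈ L with b ≤ a and b ≤ p for some p ∈ P belongs to A}. Then (i) A ⊆ D_A, so D_A is a covering downset; and (ii) for every x ∈ L and every partition U of L, if every b ∈ L with b ≤ x and b ≤ u for some u ∈ U belongs to D_A, then x ∈ D_A. -/
universe u

/-- A partition of a frame: a subset with join `⊤` whose distinct elements are
pairwise disjoint. -/
def IsPartition {L : Type u} [Order.Frame L] (P : Set L) : Prop :=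
  sSup P = ⊤ ∧ ∀ p ∈ P, ∀ q ∈ P, p ≠ q → p ⊓ q = ⊥

/-- The set `D_A` of elements `a` such that `↓a ∩ ↓P ⊆ A` for some
partition `P`. -/
def DA {L : Type u} [Order.Frame L] (A : Set L) : Set L :=
  {a | ∃ P : Set L, IsPartition P ∧ ∀ b : L, b ≤ a → (∃ p ∈ P, b ≤ p) → b ∈ A}

/-- The key properties of `D_A` used in the proof that a frame complete in a
transitive uniformity is ultraparacompact: `A ⊆ D_A` (so `D_A` is a covering
downset), and `D_A` is closed under the completeness-style condition for
partitions. -/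
theorem DA_properties {L : Type u} [Order.Frame L] (A : Set L)
    (hdown : IsLowerSet A) (hcov : sSup A = ⊤) :
    (A ⊆ DA A ∧ IsLowerSet (DA A) ∧ sSup (DA A) = ⊤) ∧
    (∀ x : L, ∀ U : Set L, IsPartition U →
      (∀ b : L, b ≤ x → (∃ u ∈ U, b ≤ u) → b ∈ DA A) → x ∈ DA A) := by
  have hsub : A ⊆ DA A := by
    intro a ha
    refine ⟨{⊤}, ⟨by simp, by simp⟩, ?_⟩
    intro b hb _
    exact hdown hb ha
  have hlow : IsLowerSet (DA A) := by
    rintro a b hba ⟨P, hP, h⟩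
    exact ⟨P, hP, fun c hc hcp => h c (hc.trans hba) hcp⟩
  refine ⟨⟨hsub, hlow, ?_⟩, ?_⟩
  · exact top_le_iff.mp (hcov ▸ sSup_le_sSup hsub)
  · rintro x U ⟨hUtop, hUdisj⟩ hall
    -- for each u ∈ U, x ⊓ u ∈ DA A; choose a partition for it
    have hxu : ∀ u ∈ U, x ⊓ u ∈ DA A := fun u hu =>
      hall _ inf_le_left ⟨u, hu, inf_le_right⟩
    choose Q hQpart hQmem using hxu
    classical
    refine ⟨⋃ u ∈ U, (fun p => u ⊓ p) '' (Q u ‹u ∈ U›), ⟨?_, ?_⟩, ?_⟩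
    · -- sSup = ⊤
      rw [sSup_eq_iSup']
      apply top_le_iff.mp
      rw [← hUtop]
      apply sSup_le
      intro u hu
      have : u = u ⊓ sSup (Q u hu) := by rw [(hQpart u hu).1, inf_top_eq]
      rw [this, inf_sSup_eq]
      apply iSup₂_le
      intro p hp
      exact le_iSup_of_le ⟨u ⊓ p, Set.mem_iUnion₂.mpr ⟨u, hu, p, hp, rfl⟩⟩ le_rfl
    · -- pairwise disjoint
      rintro e he f hf hef
      rw [Set.mem_iUnion₂] at he hf
      obtain ⟨u, hu, p, hp, rfl⟩ := he
      obtain ⟨v, hv, q, hq, rfl⟩ := hf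
      by_cases huv : u = v
      · subst huv
        have hpq : p ≠ q := fun h => hef (by rw [h])
        have := (hQpart u hu).2 p hp q hq hpq
        show u ⊓ p ⊓ (u ⊓ q) = ⊥
        exact le_bot_iff.mp ((inf_le_inf inf_le_right inf_le_right).trans this.le)
      · have := hUdisj u hu v hv huv
        show u ⊓ p ⊓ (v ⊓ q) = ⊥
        exact le_bot_iff.mp ((inf_le_inf inf_le_left inf_le_left).trans this.le)
    · -- the key membership property
      intro b hbx hbp
      obtain ⟨e, he, hbe⟩ := hbp
      rw [Set.mem_iUnion₂] at he
      obtain ⟨u, hu, p, hp, rfl⟩ := he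
      exact hQmem u hu b (le_inf hbx (hbe.trans inf_le_left)) ⟨p, hp, hbe.trans inf_le_right⟩
end

section
/- Let L be a frame, c ∈ L, and let A and B be frame congruences on L. (i) If A ∩ ∇_c is the diagonal {(x,x) : x ∈ L}, then A ⊆ Δ_c. (ii) If the frame congruence generated by B ∪ ∇_c is all of L × L, then Δ_c ⊆ B. -/
universe u

/-- Binary sup closure for a frame congruence. -/
lemma IsFrameCongruence.sup_mem_s12 {L : Type u} [Order.Frame L] {B : Set (L × L)}
    (hB : IsFrameCongruence B) {a b a' b' : L} (h1 : (a, b) ∈ B) (h2 : (a', b') ∈ B) :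
    (a ⊔ a', b ⊔ b') ∈ B := by
  have := hB.2.2 {(a, b), (a', b')} (by
    rintro p (rfl | rfl) <;> assumption)
  simpa [Set.image_pair, sSup_pair] using this

lemma sSup_sup_aux {L : Type u} [Order.Frame L] (c : L) (T : Set L) :
    sSup ((· ⊔ c) '' T ∪ {c}) = sSup T ⊔ c := by
  apply le_antisymm
  · apply sSup_le
    rintro x (⟨t, ht, rfl⟩ | rfl)
    · exact sup_le_sup_right (le_sSup ht) c
    · exact le_sup_right
  · apply sup_le
    · exact sSup_le fun t ht => le_trans le_sup_left (le_sSup (Or.inl ⟨t, ht, rfl⟩))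
    · exact le_sSup (Or.inr rfl)

/-- If a frame congruence `A` meets `∇_c` in the diagonal then `A ⊆ Δ_c`; if a
frame congruence `B` joins with `∇_c` to everything then `Δ_c ⊆ B`. -/
theorem delta_between {L : Type u} [Order.Frame L] (c : L) (A B : Set (L × L))
    (hA : IsFrameCongruence A) (hB : IsFrameCongruence B) :
    (A ∩ nabla c = Set.diagonal L → A ⊆ delta c) ∧
    (frameCongGen (B ∪ nabla c) = Set.univ → delta c ⊆ B) := by
  constructor
  · -- part (i)
    intro h p hp
    have hcc : (c, c) ∈ A := hA.1.refl c
    have hm : (p.1 ⊓ c, p.2 ⊓ c) ∈ A := hA.2.1 p (c, c) hp hcc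
    have hn : (p.1 ⊓ c, p.2 ⊓ c) ∈ nabla c := by
      simp [nabla, inf_sup_self]
    have : (p.1 ⊓ c, p.2 ⊓ c) ∈ A ∩ nabla c := ⟨hm, hn⟩
    rw [h] at this
    exact this
  · -- part (ii)
    intro h p hp
    -- the auxiliary congruence E
    set E : Set (L × L) := {q | (q.1 ⊔ c, q.2 ⊔ c) ∈ B} with hE
    have hEcong : IsFrameCongruence E := by
      refine ⟨⟨fun a => hB.1.refl _, fun h => hB.1.symm h, fun h1 h2 => hB.1.trans h1 h2⟩,
        ?_, ?_⟩
      · intro q r hq hr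
        have := hB.2.1 _ _ hq hr
        simp only [hE, Set.mem_setOf_eq] at *
        simpa [sup_inf_right] using this
      · intro S hS
        have hS' : ((fun q : L × L => (q.1 ⊔ c, q.2 ⊔ c)) '' S ∪ {(c, c)}) ⊆ B := by
          rintro q (⟨r, hr, rfl⟩ | rfl)
          · exact hS hr
          · exact hB.1.refl c
        have := hB.2.2 _ hS'
        have h1 : Prod.fst '' ((fun q : L × L => (q.1 ⊔ c, q.2 ⊔ c)) '' S ∪ {(c, c)})
            = (· ⊔ c) '' (Prod.fst '' S) ∪ {c} := by
          simp [Set.image_union, Set.image_image, Set.image_insert_eq]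
        have h2 : Prod.snd '' ((fun q : L × L => (q.1 ⊔ c, q.2 ⊔ c)) '' S ∪ {(c, c)})
            = (· ⊔ c) '' (Prod.snd '' S) ∪ {c} := by
          simp [Set.image_union, Set.image_image, Set.image_insert_eq]
        rw [h1, h2, sSup_sup_aux, sSup_sup_aux] at this
        simp only [hE, Set.mem_setOf_eq]
        exact this
    have hsub : (B ∪ nabla c) ⊆ E := by
      rintro q (hq | hq)
      · exact hB.sup_mem_s12 hq (hB.1.refl c)

      · show (q.1 ⊔ c, q.2 ⊔ c) ∈ B
        rw [hq]
        exact hB.1.refl _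
    have hmem : ((⊥ : L), (⊤ : L)) ∈ frameCongGen (B ∪ nabla c) := by
      rw [h]; trivial
    have hbot : ((⊥ : L), (⊤ : L)) ∈ E := hmem E ⟨hEcong, hsub⟩
    have hcT : (c, (⊤ : L)) ∈ B := by
      have : ((⊥ : L) ⊔ c, (⊤ : L) ⊔ c) ∈ B := hbot
      simpa using this
    -- now conclude
    have hx : (p.1 ⊓ c, p.1) ∈ B := by
      have := hB.2.1 (p.1, p.1) (c, ⊤) (hB.1.refl p.1) hcT
      simpa using this
    have hy : (p.2 ⊓ c, p.2) ∈ B := by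
      have := hB.2.1 (p.2, p.2) (c, ⊤) (hB.1.refl p.2) hcT
      simpa using this
    have hpc : p.1 ⊓ c = p.2 ⊓ c := hp
    exact hB.1.trans (hB.1.symm hx) (hpc ▸ hy)
end

section
/- Let L and M be frames and f : L → M a frame homomorphism (a map preserving finite meets, including ⊤, and arbitrary joins) that is dense, i.e. f(x) = ⊥ implies x = ⊥. Let f_* : M → L be the right adjoint of f (so f(a) ≤ b if and only if a ≤ f_*(b) for all a ∈ L, b ∈ M). Then for every a ∈ L, f_*(f(a)) ≤ a**, where x* = sSup{y ∈ L : x ⊓ y = ⊥} denotes the pseudocomplement in L. Equivalently, for all a, x ∈ L with a ⊓ x = ⊥, one has f_*(f(a)) ⊓ x = ⊥. -/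
universe u v

/-- The pseudocomplement of an element of a frame. -/
def pseudocompl {L : Type u} [Order.Frame L] (x : L) : L :=
  sSup {y | x ⊓ y = ⊥}

/-- For a dense frame homomorphism `f` with right adjoint `f_*`, one has
`f_*(f(a)) ≤ a**` for all `a`; equivalently, `a ⊓ x = ⊥` implies
`f_*(f(a)) ⊓ x = ⊥`. -/
theorem rightAdjoint_comp_le_double_pseudocompl {L : Type u} {M : Type v}
    [Order.Frame L] [Order.Frame M] (f : L → M) (fs : M → L)
    (htop : f ⊤ = ⊤)
    (hinf : ∀ a b : L, f (a ⊓ b) = f a ⊓ f b)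
    (hsup : ∀ S : Set L, f (sSup S) = ⨆ s ∈ S, f s)
    (hdense : ∀ x : L, f x = ⊥ → x = ⊥)
    (hadj : ∀ (a : L) (b : M), f a ≤ b ↔ a ≤ fs b) :
    (∀ a : L, fs (f a) ≤ pseudocompl (pseudocompl a)) ∧
    (∀ a x : L, a ⊓ x = ⊥ → fs (f a) ⊓ x = ⊥) := by
  have hbot : f ⊥ = ⊥ := by
    have := hsup ∅
    simpa using this
  have hcounit : ∀ b : M, f (fs b) ≤ b := fun b => (hadj _ _).2 le_rfl
  have key : ∀ a x : L, a ⊓ x = ⊥ → fs (f a) ⊓ x = ⊥ := by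
    intro a x hax
    apply hdense
    have h1 : f (fs (f a) ⊓ x) = f (fs (f a)) ⊓ f x := hinf _ _
    have h2 : f (fs (f a)) ⊓ f x ≤ f a ⊓ f x :=
      inf_le_inf_right _ (hcounit _)
    have h3 : f a ⊓ f x = ⊥ := by rw [← hinf, hax, hbot]
    exact le_bot_iff.1 (h1 ▸ (h3 ▸ h2))
  refine ⟨fun a => ?_, key⟩
  apply le_sSup
  show pseudocompl a ⊓ fs (f a) = ⊥
  rw [inf_comm, pseudocompl, inf_sSup_eq]
  simp only [iSup_eq_bot]
  intro y hy
  exact key a y hy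
end
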